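/- arXiv:math/0310387 — 7 statements merged into one kernel-verified Lean document; each statement's English description precedes it below -/
import Mathlib

section
/- Let R be an algebraic curvature tensor on R^n with a Cliff(ν)-structure (ν < n−1). Then for every unit vector X, the eigenvalues of the Jacobi operator R_X restricted to X^⊥ are λ₀ (with eigenspace the orthogonal complement of Span(X, J₁X,...,J_νX)) and the μ_s (with J_sX an eigenvector for eigenvalue μ_s); in particular these eigenvalues do not depend on the unit vector X, so R is Osserman. -/
open RealInnerProductSpace

theorem stmt3 (n ν : ℕ) (hν : ν < n - 1)
    (J : Fin ν → (EuclideanSpace ℝ (Fin n) →ₗ[ℝ] EuclideanSpace ℝ (Fin n)))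
    (hskew : ∀ s X Y, ⟪J s X, Y⟫ = -⟪X, J s Y⟫)
    (horth : ∀ s X, ‖J s X‖ = ‖X‖)
    (hanti : ∀ s q, s ≠ q → ∀ X, J s (J q X) = -(J q (J s X)))
    (l₀ : ℝ) (μ : Fin ν → ℝ) (hμ : ∀ s, μ s ≠ l₀)
    (R : EuclideanSpace ℝ (Fin n) → EuclideanSpace ℝ (Fin n) → EuclideanSpace ℝ (Fin n) →
      EuclideanSpace ℝ (Fin n))
    (hR : ∀ X Y Z, R X Y Z = l₀ • (⟪X, Z⟫ • Y - ⟪Y, Z⟫ • X)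
      + ∑ s, ((μ s - l₀) / 3) •
        ((2 * ⟪J s X, Y⟫) • J s Z + ⟪J s Z, Y⟫ • J s X - ⟪J s Z, X⟫ • J s Y)) :
    ∀ X : EuclideanSpace ℝ (Fin n), ‖X‖ = 1 →
      (∀ Y, ⟪Y, X⟫ = 0 → (∀ s, ⟪Y, J s X⟫ = 0) → R X Y X = l₀ • Y) ∧
      (∀ s, R X (J s X) X = (μ s) • J s X) := by
  intro X hX
  have hJXX : ∀ s, ⟪J s X, X⟫ = 0 := by
    intro s
    have h := hskew s X X
    rw [real_inner_comm X (J s X)] at h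
    rw [real_inner_comm]
    linarith
  have hXX : ⟪X, X⟫ = 1 := by
    rw [real_inner_self_eq_norm_sq, hX]; norm_num
  have hJJ : ∀ s, ⟪J s X, J s X⟫ = 1 := by
    intro s
    rw [real_inner_self_eq_norm_sq, horth, hX]; norm_num
  have hJJ' : ∀ q s : Fin ν, q ≠ s → ⟪J q X, J s X⟫ = 0 := by
    intro q s hqs
    have h1 : ⟪J q X, J s X⟫ = -⟪X, J q (J s X)⟫ := hskew q X (J s X)
    rw [hanti q s hqs X] at h1
    simp only [inner_neg_right, neg_neg] at h1
    have h2 : ⟪J s X, J q X⟫ = -⟪X, J s (J q X)⟫ := hskew s X (J q X)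
    have h3 : ⟪J s X, J q X⟫ = ⟪J q X, J s X⟫ := real_inner_comm _ _
    linarith
  constructor
  · intro Y hYX hYJ
    rw [hR]
    have hJY : ∀ s, ⟪J s X, Y⟫ = 0 := fun s => by
      rw [real_inner_comm]; exact hYJ s
    simp [hXX, hYX, hJXX, hJY, hX]
  · intro s
    rw [hR]
    have hsum : ∀ q ∈ Finset.univ, (((μ q - l₀) / 3) •
        ((2 * ⟪J q X, J s X⟫) • J q X + ⟪J q X, J s X⟫ • J q X - ⟪J q X, X⟫ • J q (J s X))
          : EuclideanSpace ℝ (Fin n))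
        = if q = s then (μ s - l₀) • J s X else 0 := by
      intro q _
      by_cases hq : q = s
      · subst hq
        rw [if_pos rfl, hJJ, hJXX]
        simp only [mul_one, zero_smul, sub_zero]
        rw [← add_smul]
        rw [smul_smul]
        ring_nf
      · rw [if_neg hq, hJJ' q s hq, hJXX]
        simp
    rw [Finset.sum_congr rfl hsum]
    rw [Finset.sum_ite_eq' Finset.univ s (fun _ => (μ s - l₀) • J s X)]
    simp only [Finset.mem_univ, if_pos, hXX, hJXX]
    rw [zero_smul, sub_zero, one_smul, ← add_smul]
    ring_nf
end

section
/- The level of the field L₇ = R(x₁,...,x₇)(√(−(x₁²+...+x₇²))) equals 4; that is, −1 is a sum of 4 squares in L₇ but not a sum of 3 squares. -/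
set_option linter.unusedSectionVars false
set_option linter.unusedVariables false
set_option maxHeartbeats 1000000
set_option synthInstance.maxHeartbeats 200000

open Polynomial

namespace SL7

noncomputable def dP (n : ℕ) : MvPolynomial (Fin n) ℝ := ∑ i, MvPolynomial.X i ^ 2

lemma eval_dP_nonneg {n : ℕ} (pt : Fin n → ℝ) : 0 ≤ MvPolynomial.eval pt (dP n) := by
  rw [dP, map_sum]
  apply Finset.sum_nonneg
  intro i _
  rw [map_pow]
  positivity

lemma mv_eq_zero {n : ℕ} (P : MvPolynomial (Fin n) ℝ) (h : ∀ pt, MvPolynomial.eval pt P = 0) : P = 0 :=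
  MvPolynomial.funext (fun x => by rw [h x, map_zero])

lemma dP_ne_zero {n : ℕ} (hn : 0 < n) : dP n ≠ 0 := by
  intro h
  have := congrArg (MvPolynomial.eval (fun _ => (1:ℝ))) h
  rw [dP, map_sum, map_zero] at this
  simp only [map_pow, MvPolynomial.eval_X, one_pow] at this
  simp at this
  omega

lemma mv_sq4 {n : ℕ} (P Q R S : MvPolynomial (Fin n) ℝ)
    (h : P^2 + Q^2 + R^2 + S^2 = 0) : P = 0 ∧ Q = 0 ∧ R = 0 ∧ S = 0 := by
  have key : ∀ T : MvPolynomial (Fin n) ℝ,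
      (∀ pt, MvPolynomial.eval pt P ^2 + MvPolynomial.eval pt Q ^2 + MvPolynomial.eval pt R^2 + MvPolynomial.eval pt S^2 = 0) → True := fun _ _ => trivial
  have hev : ∀ pt, MvPolynomial.eval pt P ^2 + MvPolynomial.eval pt Q ^2 + MvPolynomial.eval pt R^2 + MvPolynomial.eval pt S^2 = 0 := by
    intro pt
    have := congrArg (MvPolynomial.eval pt) h
    simpa [map_add, map_pow] using this
  refine ⟨mv_eq_zero _ fun pt => ?_, mv_eq_zero _ fun pt => ?_, mv_eq_zero _ fun pt => ?_,
    mv_eq_zero _ fun pt => ?_⟩ <;> nlinarith [hev pt, sq_nonneg (MvPolynomial.eval pt P), sq_nonneg (MvPolynomial.eval pt Q), sq_nonneg (MvPolynomial.eval pt R), sq_nonneg (MvPolynomial.eval pt S)]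

lemma mv_sq_d {n : ℕ} (hn : 0 < n) (P Q : MvPolynomial (Fin n) ℝ)
    (h : P^2 + dP n * Q^2 = 0) : P = 0 ∧ Q = 0 := by
  have hP : P = 0 := by
    apply mv_eq_zero
    intro pt
    have := congrArg (MvPolynomial.eval pt) h
    simp only [map_add, map_pow, map_mul, map_zero] at this
    nlinarith [eval_dP_nonneg pt, sq_nonneg (MvPolynomial.eval pt P), sq_nonneg (MvPolynomial.eval pt Q), this]
  subst hP
  refine ⟨rfl, ?_⟩
  have h2 : dP n * Q ^ 2 = 0 := by linear_combination h
  rcases mul_eq_zero.mp h2 with h' | h'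
  · exact absurd h' (dP_ne_zero hn)
  · exact pow_eq_zero_iff (two_ne_zero) |>.mp h'

abbrev K (n : ℕ) := FractionRing (MvPolynomial (Fin n) ℝ)

noncomputable def A (n : ℕ) : MvPolynomial (Fin n) ℝ →+* K n :=
  algebraMap (MvPolynomial (Fin n) ℝ) (K n)

lemma A_inj {n : ℕ} : Function.Injective (A n) :=
  IsFractionRing.injective (MvPolynomial (Fin n) ℝ) (K n)

lemma A_eq_zero {n : ℕ} {p : MvPolynomial (Fin n) ℝ} (h : A n p = 0) : p = 0 :=
  A_inj (by rw [h, map_zero])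

lemma frac_rep {n : ℕ} (x : K n) :
    ∃ p q : MvPolynomial (Fin n) ℝ, q ≠ 0 ∧ x * A n q = A n p := by
  obtain ⟨⟨p, q⟩, h⟩ := IsLocalization.surj (nonZeroDivisors (MvPolynomial (Fin n) ℝ)) x
  exact ⟨p, q, nonZeroDivisors.coe_ne_zero q, h⟩



lemma frac_sq4 {n : ℕ} (a b c d : K n) (h : a^2 + b^2 + c^2 + d^2 = 0) :
    a = 0 ∧ b = 0 ∧ c = 0 ∧ d = 0 := by
  obtain ⟨pa, qa, hqa, ha⟩ := frac_rep a
  obtain ⟨pb, qb, hqb, hb⟩ := frac_rep b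
  obtain ⟨pc, qc, hqc, hc⟩ := frac_rep c
  obtain ⟨pd, qd, hqd, hd⟩ := frac_rep d
  have key : A n ((pa*(qb*qc*qd))^2 + (pb*(qa*qc*qd))^2 + (pc*(qa*qb*qd))^2
      + (pd*(qa*qb*qc))^2) = 0 := by
    simp only [map_add, map_mul, map_pow]
    rw [← ha, ← hb, ← hc, ← hd]
    linear_combination (A n qa * A n qb * A n qc * A n qd)^2 * h
  have hz := mv_sq4 _ _ _ _ (A_eq_zero key)
  have hne : ∀ q : MvPolynomial (Fin n) ℝ, q ≠ 0 → A n q ≠ 0 :=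
    fun q hq h0 => hq (A_eq_zero h0)
  refine ⟨?_, ?_, ?_, ?_⟩
  · have : pa = 0 := by
      rcases mul_eq_zero.mp hz.1 with h' | h'
      · exact h'
      · exact absurd h' (by simp [hqb, hqc, hqd])
    subst this
    rw [map_zero] at ha
    exact (mul_eq_zero.mp ha).resolve_right (hne _ hqa)
  · have : pb = 0 := by
      rcases mul_eq_zero.mp hz.2.1 with h' | h'
      · exact h'
      · exact absurd h' (by simp [hqa, hqc, hqd])
    subst this
    rw [map_zero] at hb
    exact (mul_eq_zero.mp hb).resolve_right (hne _ hqb)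
  · have : pc = 0 := by
      rcases mul_eq_zero.mp hz.2.2.1 with h' | h'
      · exact h'
      · exact absurd h' (by simp [hqa, hqb, hqd])
    subst this
    rw [map_zero] at hc
    exact (mul_eq_zero.mp hc).resolve_right (hne _ hqc)
  · have : pd = 0 := by
      rcases mul_eq_zero.mp hz.2.2.2 with h' | h'
      · exact h'
      · exact absurd h' (by simp [hqa, hqb, hqc])
    subst this
    rw [map_zero] at hd
    exact (mul_eq_zero.mp hd).resolve_right (hne _ hqd)

lemma frac_sq3 {n : ℕ} (a b c : K n) (h : a^2 + b^2 + c^2 = 0) :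
    a = 0 ∧ b = 0 ∧ c = 0 := by
  have := frac_sq4 a b c 0 (by linear_combination h)
  exact ⟨this.1, this.2.1, this.2.2.1⟩

lemma frac_sq2 {n : ℕ} (a b : K n) (h : a^2 + b^2 = 0) : a = 0 ∧ b = 0 := by
  have := frac_sq4 a b 0 0 (by linear_combination h)
  exact ⟨this.1, this.2.1⟩

lemma frac_sq_d {n : ℕ} (hn : 0 < n) (x y : K n)
    (h : x^2 + A n (dP n) * y^2 = 0) : x = 0 ∧ y = 0 := by
  obtain ⟨px, qx, hqx, hx⟩ := frac_rep x
  obtain ⟨py, qy, hqy, hy⟩ := frac_rep y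
  have key : A n ((px*qy)^2 + dP n * (qx*py)^2) = 0 := by
    simp only [map_add, map_mul, map_pow]
    rw [← hx, ← hy]
    linear_combination (A n qx * A n qy)^2 * h
  have hz := mv_sq_d hn _ _ (A_eq_zero key)
  have hne : ∀ q : MvPolynomial (Fin n) ℝ, q ≠ 0 → A n q ≠ 0 :=
    fun q hq h0 => hq (A_eq_zero h0)
  constructor
  · have : px = 0 := (mul_eq_zero.mp hz.1).resolve_right hqy
    subst this
    rw [map_zero] at hx
    exact (mul_eq_zero.mp hx).resolve_right (hne _ hqx)
  · have : py = 0 := (mul_eq_zero.mp hz.2).resolve_left hqx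
    subst this
    rw [map_zero] at hy
    exact (mul_eq_zero.mp hy).resolve_right (hne _ hqy)


section Cassels
variable {k : Type} [Field k] [Infinite k]

lemma sqsum3_ne_zero
    (hreal : ∀ x y z : k, x^2+y^2+z^2 = 0 → x = 0 ∧ y = 0 ∧ z = 0)
    {r₁ r₂ r₃ : Polynomial k} (hne : ¬(r₁ = 0 ∧ r₂ = 0 ∧ r₃ = 0)) :
    r₁^2 + r₂^2 + r₃^2 ≠ 0 := by
  intro h
  apply hne
  have hz : ∀ t : k, r₁.eval t = 0 ∧ r₂.eval t = 0 ∧ r₃.eval t = 0 := by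
    intro t
    have h' := congrArg (Polynomial.eval t) h
    simp only [eval_add, eval_pow, eval_zero] at h'
    exact hreal _ _ _ h'
  refine ⟨?_, ?_, ?_⟩ <;>
    · apply Polynomial.funext
      intro t
      simp [(hz t).1, (hz t).2.1, (hz t).2.2]

lemma cassels3_const (p f₀ f₁ f₂ f₃ : Polynomial k) (hdeg : f₀.natDegree = 0) (h0 : f₀ ≠ 0)
    (E : p * f₀^2 = f₁^2 + f₂^2 + f₃^2) :
    ∃ g₁ g₂ g₃ : Polynomial k, p = g₁^2 + g₂^2 + g₃^2 := by
  have hf₀ : f₀ = C (f₀.coeff 0) := eq_C_of_natDegree_eq_zero hdeg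
  set c := f₀.coeff 0 with hc
  have hcne : c ≠ 0 := by
    intro h; apply h0; rw [hf₀, h, map_zero]
  have hinv : C (c⁻¹) * C c = (1 : Polynomial k) := by
    rw [← C_mul, inv_mul_cancel₀ hcne, C_1]
  refine ⟨f₁ * C c⁻¹, f₂ * C c⁻¹, f₃ * C c⁻¹, ?_⟩
  rw [hf₀] at E
  linear_combination (C (c⁻¹))^2 * E - (p*(1 + C (c⁻¹) * C c)) * hinv

lemma natDegree_le_of_degree_lt {r m : Polynomial k} (hm : 1 ≤ m.natDegree)
    (h : r.degree < m.degree) : r.natDegree ≤ m.natDegree - 1 := by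
  rcases eq_or_ne r 0 with rfl | hr
  · simp
  · have := natDegree_lt_natDegree hr h
    omega

lemma cassels3
    (hreal : ∀ x y z : k, x^2+y^2+z^2 = 0 → x = 0 ∧ y = 0 ∧ z = 0) (p : Polynomial k) :
    ∀ N : ℕ, ∀ f₀ f₁ f₂ f₃ : Polynomial k, f₀.natDegree ≤ N → f₀ ≠ 0 →
    p * f₀^2 = f₁^2 + f₂^2 + f₃^2 →
    ∃ g₁ g₂ g₃ : Polynomial k, p = g₁^2 + g₂^2 + g₃^2 := by
  intro N
  induction N with
  | zero =>
    intro f₀ f₁ f₂ f₃ hdeg h0 E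
    exact cassels3_const p f₀ f₁ f₂ f₃ (Nat.le_zero.mp hdeg) h0 E
  | succ N ih =>
    intro f₀ f₁ f₂ f₃ hdeg h0 E
    by_cases hc : f₀.natDegree = 0
    · exact cassels3_const p f₀ f₁ f₂ f₃ hc h0 E
    · -- normalize to monic
      set u := f₀.leadingCoeff with hu
      have hune : u ≠ 0 := leadingCoeff_ne_zero.mpr h0
      set m := f₀ * C u⁻¹ with hm
      have hmonic : m.Monic := monic_mul_leadingCoeff_inv h0
      have hmdeg : m.natDegree = f₀.natDegree := natDegree_mul_C (inv_ne_zero hune)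
      have hm1 : 1 ≤ m.natDegree := by omega
      have hm0 : m ≠ 0 := hmonic.ne_zero
      set F₁ := f₁ * C u⁻¹ with hF₁
      set F₂ := f₂ * C u⁻¹ with hF₂
      set F₃ := f₃ * C u⁻¹ with hF₃
      have E' : p * m^2 = F₁^2 + F₂^2 + F₃^2 := by
        rw [hm, hF₁, hF₂, hF₃]
        linear_combination (C u⁻¹)^2 * E
      set h₁ := F₁ /ₘ m with hh₁
      set h₂ := F₂ /ₘ m with hh₂
      set h₃ := F₃ /ₘ m with hh₃
      set r₁ := F₁ - m * h₁ with hr₁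
      set r₂ := F₂ - m * h₂ with hr₂
      set r₃ := F₃ - m * h₃ with hr₃
      have hrmod : ∀ (F : Polynomial k), F - m * (F /ₘ m) = F %ₘ m := by
        intro F
        rw [modByMonic_eq_sub_mul_div F m]
      have hdr₁ : r₁.degree < m.degree := by rw [hr₁, hh₁, hrmod]; exact degree_modByMonic_lt _ hmonic
      have hdr₂ : r₂.degree < m.degree := by rw [hr₂, hh₂, hrmod]; exact degree_modByMonic_lt _ hmonic
      have hdr₃ : r₃.degree < m.degree := by rw [hr₃, hh₃, hrmod]; exact degree_modByMonic_lt _ hmonic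
      by_cases hr : r₁ = 0 ∧ r₂ = 0 ∧ r₃ = 0
      · refine ⟨h₁, h₂, h₃, ?_⟩
        have e₁ : F₁ = m * h₁ := by rw [← sub_eq_zero]; exact hr.1
        have e₂ : F₂ = m * h₂ := by rw [← sub_eq_zero]; exact hr.2.1
        have e₃ : F₃ = m * h₃ := by rw [← sub_eq_zero]; exact hr.2.2
        have hcan : m^2 * p = m^2 * (h₁^2 + h₂^2 + h₃^2) := by
          rw [e₁, e₂, e₃] at E'
          linear_combination E'
        exact mul_left_cancel₀ (pow_ne_zero 2 hm0) hcan
      · set B := F₁*h₁ + F₂*h₂ + F₃*h₃ with hB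
        set Hs := h₁^2 + h₂^2 + h₃^2 with hHs
        set f' := p*m - 2*B + m*Hs with hf'
        set g₁ := (Hs - p)*F₁ + 2*(p*m - B)*h₁ with hg₁
        set g₂ := (Hs - p)*F₂ + 2*(p*m - B)*h₂ with hg₂
        set g₃ := (Hs - p)*F₃ + 2*(p*m - B)*h₃ with hg₃
        have K1 : m * f' = r₁^2 + r₂^2 + r₃^2 := by
          rw [hf', hB, hHs, hr₁, hr₂, hr₃]
          linear_combination E'
        have K2 : p * f'^2 = g₁^2 + g₂^2 + g₃^2 := by
          rw [hf', hg₁, hg₂, hg₃, hB, hHs]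
          linear_combination (p - (h₁^2+h₂^2+h₃^2))^2 * E'
        have hrs : r₁^2 + r₂^2 + r₃^2 ≠ 0 := sqsum3_ne_zero hreal hr
        have hf'0 : f' ≠ 0 := by
          intro h'
          rw [h', mul_zero] at K1
          exact hrs K1.symm
        have hdeg' : f'.natDegree ≤ N := by
          have hmul : m.natDegree + f'.natDegree = (r₁^2 + r₂^2 + r₃^2).natDegree := by
            rw [← natDegree_mul hm0 hf'0, K1]
          have hb : (r₁^2 + r₂^2 + r₃^2).natDegree ≤ 2*(m.natDegree - 1) := by
            have b₁ : (r₁^2).natDegree ≤ 2*(m.natDegree-1) := by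
              rw [natDegree_pow]
              have := natDegree_le_of_degree_lt hm1 hdr₁
              omega
            have b₂ : (r₂^2).natDegree ≤ 2*(m.natDegree-1) := by
              rw [natDegree_pow]
              have := natDegree_le_of_degree_lt hm1 hdr₂
              omega
            have b₃ : (r₃^2).natDegree ≤ 2*(m.natDegree-1) := by
              rw [natDegree_pow]
              have := natDegree_le_of_degree_lt hm1 hdr₃
              omega
            calc (r₁^2 + r₂^2 + r₃^2).natDegree ≤ _ := natDegree_add_le _ _
              _ ≤ 2*(m.natDegree-1) := by
                refine max_le (le_trans (natDegree_add_le _ _) (max_le b₁ b₂)) b₃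
          omega
        exact ih f' g₁ g₂ g₃ hdeg' hf'0 K2

lemma natDegree_le_of_degree_lt' {r m : Polynomial k} (hm : 1 ≤ m.natDegree)
    (h : r.degree < m.degree) : r.natDegree ≤ m.natDegree - 1 := by
  rcases eq_or_ne r 0 with rfl | hr
  · simp
  · have := natDegree_lt_natDegree hr h
    omega

lemma sqsum2_ne_zero
    (hreal : ∀ x y z : k, x^2+y^2+z^2 = 0 → x = 0 ∧ y = 0 ∧ z = 0)
    {r₁ r₂ : Polynomial k} (hne : ¬(r₁ = 0 ∧ r₂ = 0)) :
    r₁^2 + r₂^2 ≠ 0 := by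
  intro h
  apply hne
  have hz : ∀ t : k, r₁.eval t = 0 ∧ r₂.eval t = 0 := by
    intro t
    have h' : r₁.eval t ^2 + r₂.eval t ^2 + (0:k)^2 = 0 := by
      have h'' := congrArg (Polynomial.eval t) h
      simp only [eval_add, eval_pow, eval_zero] at h''
      linear_combination h''
    have := hreal _ _ _ h'
    exact ⟨this.1, this.2.1⟩
  constructor <;>
    · apply Polynomial.funext
      intro t
      simp [(hz t).1, (hz t).2]

lemma cassels2_const (p f₀ f₁ f₂ : Polynomial k) (hdeg : f₀.natDegree = 0) (h0 : f₀ ≠ 0)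
    (E : p * f₀^2 = f₁^2 + f₂^2) :
    ∃ g₁ g₂ : Polynomial k, p = g₁^2 + g₂^2 := by
  have hf₀ : f₀ = C (f₀.coeff 0) := eq_C_of_natDegree_eq_zero hdeg
  set c := f₀.coeff 0 with hc
  have hcne : c ≠ 0 := by
    intro h; apply h0; rw [hf₀, h, map_zero]
  have hinv : C (c⁻¹) * C c = (1 : Polynomial k) := by
    rw [← C_mul, inv_mul_cancel₀ hcne, C_1]
  refine ⟨f₁ * C c⁻¹, f₂ * C c⁻¹, ?_⟩
  rw [hf₀] at E
  linear_combination (C (c⁻¹))^2 * E - (p*(1 + C (c⁻¹) * C c)) * hinv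

lemma cassels2
    (hreal : ∀ x y z : k, x^2+y^2+z^2 = 0 → x = 0 ∧ y = 0 ∧ z = 0) (p : Polynomial k) :
    ∀ N : ℕ, ∀ f₀ f₁ f₂ : Polynomial k, f₀.natDegree ≤ N → f₀ ≠ 0 →
    p * f₀^2 = f₁^2 + f₂^2 →
    ∃ g₁ g₂ : Polynomial k, p = g₁^2 + g₂^2 := by
  intro N
  induction N with
  | zero =>
    intro f₀ f₁ f₂ hdeg h0 E
    exact cassels2_const p f₀ f₁ f₂ (Nat.le_zero.mp hdeg) h0 E
  | succ N ih =>
    intro f₀ f₁ f₂ hdeg h0 E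
    by_cases hc : f₀.natDegree = 0
    · exact cassels2_const p f₀ f₁ f₂ hc h0 E
    · set u := f₀.leadingCoeff with hu
      have hune : u ≠ 0 := leadingCoeff_ne_zero.mpr h0
      set m := f₀ * C u⁻¹ with hm
      have hmonic : m.Monic := monic_mul_leadingCoeff_inv h0
      have hmdeg : m.natDegree = f₀.natDegree := natDegree_mul_C (inv_ne_zero hune)
      have hm1 : 1 ≤ m.natDegree := by omega
      have hm0 : m ≠ 0 := hmonic.ne_zero
      set F₁ := f₁ * C u⁻¹ with hF₁
      set F₂ := f₂ * C u⁻¹ with hF₂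
      have E' : p * m^2 = F₁^2 + F₂^2 := by
        rw [hm, hF₁, hF₂]
        linear_combination (C u⁻¹)^2 * E
      set h₁ := F₁ /ₘ m with hh₁
      set h₂ := F₂ /ₘ m with hh₂
      set r₁ := F₁ - m * h₁ with hr₁
      set r₂ := F₂ - m * h₂ with hr₂
      have hrmod : ∀ (F : Polynomial k), F - m * (F /ₘ m) = F %ₘ m := by
        intro F
        rw [modByMonic_eq_sub_mul_div F m]
      have hdr₁ : r₁.degree < m.degree := by rw [hr₁, hh₁, hrmod]; exact degree_modByMonic_lt _ hmonic
      have hdr₂ : r₂.degree < m.degree := by rw [hr₂, hh₂, hrmod]; exact degree_modByMonic_lt _ hmonic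
      by_cases hr : r₁ = 0 ∧ r₂ = 0
      · refine ⟨h₁, h₂, ?_⟩
        have e₁ : F₁ = m * h₁ := by rw [← sub_eq_zero]; exact hr.1
        have e₂ : F₂ = m * h₂ := by rw [← sub_eq_zero]; exact hr.2
        have hcan : m^2 * p = m^2 * (h₁^2 + h₂^2) := by
          rw [e₁, e₂] at E'
          linear_combination E'
        exact mul_left_cancel₀ (pow_ne_zero 2 hm0) hcan
      · set B := F₁*h₁ + F₂*h₂ with hB
        set Hs := h₁^2 + h₂^2 with hHs
        set f' := p*m - 2*B + m*Hs with hf'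
        set g₁ := (Hs - p)*F₁ + 2*(p*m - B)*h₁ with hg₁
        set g₂ := (Hs - p)*F₂ + 2*(p*m - B)*h₂ with hg₂
        have K1 : m * f' = r₁^2 + r₂^2 := by
          rw [hf', hB, hHs, hr₁, hr₂]
          linear_combination E'
        have K2 : p * f'^2 = g₁^2 + g₂^2 := by
          rw [hf', hg₁, hg₂, hB, hHs]
          linear_combination (p - (h₁^2+h₂^2))^2 * E'
        have hrs : r₁^2 + r₂^2 ≠ 0 := sqsum2_ne_zero hreal hr
        have hf'0 : f' ≠ 0 := by
          intro h'
          rw [h', mul_zero] at K1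
          exact hrs K1.symm
        have hdeg' : f'.natDegree ≤ N := by
          have hmul : m.natDegree + f'.natDegree = (r₁^2 + r₂^2).natDegree := by
            rw [← natDegree_mul hm0 hf'0, K1]
          have hb : (r₁^2 + r₂^2).natDegree ≤ 2*(m.natDegree - 1) := by
            have b₁ : (r₁^2).natDegree ≤ 2*(m.natDegree-1) := by
              rw [natDegree_pow]
              have := natDegree_le_of_degree_lt' hm1 hdr₁
              omega
            have b₂ : (r₂^2).natDegree ≤ 2*(m.natDegree-1) := by
              rw [natDegree_pow]
              have := natDegree_le_of_degree_lt' hm1 hdr₂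
              omega
            calc (r₁^2 + r₂^2).natDegree ≤ _ := natDegree_add_le _ _
              _ ≤ 2*(m.natDegree-1) := max_le b₁ b₂
          omega
        exact ih f' g₁ g₂ hdeg' hf'0 K2

lemma sqsum1_ne_zero
    (hreal : ∀ x y z : k, x^2+y^2+z^2 = 0 → x = 0 ∧ y = 0 ∧ z = 0)
    {r₁ : Polynomial k} (hne : ¬(r₁ = 0)) : r₁^2 ≠ 0 := by
  intro h
  exact hne (pow_eq_zero_iff two_ne_zero |>.mp h)

lemma cassels1_const (p f₀ f₁ : Polynomial k) (hdeg : f₀.natDegree = 0) (h0 : f₀ ≠ 0)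
    (E : p * f₀^2 = f₁^2) :
    ∃ g₁ : Polynomial k, p = g₁^2 := by
  have hf₀ : f₀ = C (f₀.coeff 0) := eq_C_of_natDegree_eq_zero hdeg
  set c := f₀.coeff 0 with hc
  have hcne : c ≠ 0 := by
    intro h; apply h0; rw [hf₀, h, map_zero]
  have hinv : C (c⁻¹) * C c = (1 : Polynomial k) := by
    rw [← C_mul, inv_mul_cancel₀ hcne, C_1]
  refine ⟨f₁ * C c⁻¹, ?_⟩
  rw [hf₀] at E
  linear_combination (C (c⁻¹))^2 * E - (p*(1 + C (c⁻¹) * C c)) * hinv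

lemma cassels1
    (hreal : ∀ x y z : k, x^2+y^2+z^2 = 0 → x = 0 ∧ y = 0 ∧ z = 0) (p : Polynomial k) :
    ∀ N : ℕ, ∀ f₀ f₁ : Polynomial k, f₀.natDegree ≤ N → f₀ ≠ 0 →
    p * f₀^2 = f₁^2 →
    ∃ g₁ : Polynomial k, p = g₁^2 := by
  intro N
  induction N with
  | zero =>
    intro f₀ f₁ hdeg h0 E
    exact cassels1_const p f₀ f₁ (Nat.le_zero.mp hdeg) h0 E
  | succ N ih =>
    intro f₀ f₁ hdeg h0 E
    by_cases hc : f₀.natDegree = 0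
    · exact cassels1_const p f₀ f₁ hc h0 E
    · set u := f₀.leadingCoeff with hu
      have hune : u ≠ 0 := leadingCoeff_ne_zero.mpr h0
      set m := f₀ * C u⁻¹ with hm
      have hmonic : m.Monic := monic_mul_leadingCoeff_inv h0
      have hmdeg : m.natDegree = f₀.natDegree := natDegree_mul_C (inv_ne_zero hune)
      have hm1 : 1 ≤ m.natDegree := by omega
      have hm0 : m ≠ 0 := hmonic.ne_zero
      set F₁ := f₁ * C u⁻¹ with hF₁
      have E' : p * m^2 = F₁^2 := by
        rw [hm, hF₁]
        linear_combination (C u⁻¹)^2 * E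
      set h₁ := F₁ /ₘ m with hh₁
      set r₁ := F₁ - m * h₁ with hr₁
      have hrmod : ∀ (F : Polynomial k), F - m * (F /ₘ m) = F %ₘ m := by
        intro F
        rw [modByMonic_eq_sub_mul_div F m]
      have hdr₁ : r₁.degree < m.degree := by rw [hr₁, hh₁, hrmod]; exact degree_modByMonic_lt _ hmonic
      by_cases hr : r₁ = 0
      · refine ⟨h₁, ?_⟩
        have e₁ : F₁ = m * h₁ := by rw [← sub_eq_zero]; exact hr
        have hcan : m^2 * p = m^2 * (h₁^2) := by
          rw [e₁] at E'
          linear_combination E'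
        exact mul_left_cancel₀ (pow_ne_zero 2 hm0) hcan
      · set B := F₁*h₁ with hB
        set Hs := h₁^2 with hHs
        set f' := p*m - 2*B + m*Hs with hf'
        set g₁ := (Hs - p)*F₁ + 2*(p*m - B)*h₁ with hg₁
        have K1 : m * f' = r₁^2 := by
          rw [hf', hB, hHs, hr₁]
          linear_combination E'
        have K2 : p * f'^2 = g₁^2 := by
          rw [hf', hg₁, hB, hHs]
          linear_combination (p - (h₁^2))^2 * E'
        have hrs : r₁^2 ≠ 0 := sqsum1_ne_zero hreal hr
        have hf'0 : f' ≠ 0 := by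
          intro h'
          rw [h', mul_zero] at K1
          exact hrs K1.symm
        have hdeg' : f'.natDegree ≤ N := by
          have hmul : m.natDegree + f'.natDegree = (r₁^2).natDegree := by
            rw [← natDegree_mul hm0 hf'0, K1]
          have hb : (r₁^2).natDegree ≤ 2*(m.natDegree - 1) := by
            rw [natDegree_pow]
            have := natDegree_le_of_degree_lt' hm1 hdr₁
            omega
          omega
        exact ih f' g₁ hdeg' hf'0 K2

lemma expand_sq (a b : k) : (C a * X + C b)^2
    = C (a^2) * X^2 + C (2*(a*b)) * X + C (b^2) := by
  simp only [map_mul, map_pow, map_ofNat]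
  ring

lemma coeff_sq_at (v : Polynomial k) (N : ℕ) (hv : v.natDegree ≤ N) :
    (v^2).coeff (2*N) = (v.coeff N)^2 := by
  rw [sq, coeff_mul, sq]
  rw [Finset.sum_eq_single (N, N)]
  · intro b hb hne
    rw [Finset.HasAntidiagonal.mem_antidiagonal] at hb
    have hor : N < b.1 ∨ N < b.2 := by
      by_contra hcon
      push_neg at hcon
      apply hne
      have hbe : b.1 = N ∧ b.2 = N := by omega
      exact Prod.ext hbe.1 hbe.2
    rcases hor with h' | h'
    · rw [coeff_eq_zero_of_natDegree_lt (lt_of_le_of_lt hv h'), zero_mul]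
    · rw [coeff_eq_zero_of_natDegree_lt (lt_of_le_of_lt hv h'), mul_zero]
  · intro hnot
    exact absurd (Finset.HasAntidiagonal.mem_antidiagonal.mpr (two_mul N).symm) hnot

lemma coeffs_of_sq3 [CharZero k] (a₁ b₁ a₂ b₂ a₃ b₃ c : k)
    (hEq : X^2 + C c = (C a₁ * X + C b₁)^2 + (C a₂*X + C b₂)^2 + (C a₃*X+C b₃)^2) :
    a₁^2+a₂^2+a₃^2 = 1 ∧ a₁*b₁+a₂*b₂+a₃*b₃ = 0 ∧ b₁^2+b₂^2+b₃^2 = c := by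
  rw [expand_sq, expand_sq, expand_sq] at hEq
  have h2 := congrArg (fun q => coeff q 2) hEq
  have h1 := congrArg (fun q => coeff q 1) hEq
  have h0 := congrArg (fun q => coeff q 0) hEq
  simp only [coeff_add, coeff_C_mul, coeff_X_pow, coeff_X, coeff_C] at h2 h1 h0
  norm_num at h2 h1 h0
  have hmid : (2:k) * (a₁*b₁+a₂*b₂+a₃*b₃) = 0 := by linear_combination -h1
  rcases mul_eq_zero.mp hmid with h' | h'
  · exact absurd h' two_ne_zero
  · exact ⟨by linear_combination -h2, h', by linear_combination -h0⟩

lemma natdeg_le_one_of_sq3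
    (hreal : ∀ x y z : k, x^2+y^2+z^2 = 0 → x = 0 ∧ y = 0 ∧ z = 0)
    {g₁ g₂ g₃ : Polynomial k} {c : k}
    (hEq : X^2 + C c = g₁^2 + g₂^2 + g₃^2) :
    g₁.natDegree ≤ 1 ∧ g₂.natDegree ≤ 1 ∧ g₃.natDegree ≤ 1 := by
  set N := max (max g₁.natDegree g₂.natDegree) g₃.natDegree with hN
  have hd₁ : g₁.natDegree ≤ N := le_trans (le_max_left _ _) (le_max_left _ _)
  have hd₂ : g₂.natDegree ≤ N := le_trans (le_max_right _ _) (le_max_left _ _)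
  have hd₃ : g₃.natDegree ≤ N := le_max_right _ _
  by_contra hcon
  have hN2 : 2 ≤ N := by omega
  have hrhs := congrArg (fun q => coeff q (2*N)) hEq
  simp only [coeff_add] at hrhs
  rw [coeff_sq_at g₁ N hd₁, coeff_sq_at g₂ N hd₂, coeff_sq_at g₃ N hd₃] at hrhs
  have hx : (X^2 : Polynomial k).coeff (2*N) = 0 := by
    rw [coeff_X_pow]
    simp only [ite_eq_right_iff]
    intro h'
    omega
  have hcc : (C c : Polynomial k).coeff (2*N) = 0 := by
    rw [coeff_C, if_neg (by omega)]
  rw [hx, hcc] at hrhs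
  have hz := hreal (g₁.coeff N) (g₂.coeff N) (g₃.coeff N) (by linear_combination -hrhs)
  -- some gᵢ attains N
  have hattain : g₁.natDegree = N ∨ g₂.natDegree = N ∨ g₃.natDegree = N := by omega
  have hfin : ∀ g : Polynomial k, g.natDegree = N → g.coeff N ≠ 0 := by
    intro g hg
    have hgne : g ≠ 0 := by
      intro h'
      rw [h', natDegree_zero] at hg
      omega
    rw [← hg]
    exact leadingCoeff_ne_zero.mpr hgne
  rcases hattain with h' | h' | h'
  · exact hfin _ h' hz.1
  · exact hfin _ h' hz.2.1
  · exact hfin _ h' hz.2.2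
lemma witt3 (hreal : ∀ x y z : k, x^2+y^2+z^2 = 0 → x = 0 ∧ y = 0 ∧ z = 0)
    (a₁ a₂ a₃ b₁ b₂ b₃ : k)
    (h1 : a₁^2+a₂^2+a₃^2 = 1) (h2 : a₁*b₁+a₂*b₂+a₃*b₃ = 0) :
    ∃ s t : k, b₁^2+b₂^2+b₃^2 = s^2+t^2 := by
  by_cases ha : a₁ = 1
  · subst ha
    have hz : (0:k)^2 + a₂^2 + a₃^2 = 0 := by linear_combination h1
    obtain ⟨-, h₂', h₃'⟩ := hreal _ _ _ hz
    subst h₂'; subst h₃'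
    have hb₁ : b₁ = 0 := by linear_combination h2
    exact ⟨b₂, b₃, by rw [hb₁]; ring⟩
  · have he : (1:k) - a₁ ≠ 0 := sub_ne_zero.mpr (Ne.symm ha)
    refine ⟨b₂ + b₁*a₂/(1-a₁), b₃ + b₁*a₃/(1-a₁), ?_⟩
    field_simp
    ring_nf
    linear_combination (-2*(1-a₁)*b₁) * h2 - b₁^2 * h1

lemma witt2 (a₁ a₂ b₁ b₂ : k)
    (h1 : a₁^2+a₂^2 = 1) (h2 : a₁*b₁+a₂*b₂ = 0) :
    ∃ s : k, b₁^2+b₂^2 = s^2 := by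
  refine ⟨a₁*b₂ - a₂*b₁, ?_⟩
  linear_combination (a₁*b₁+a₂*b₂)*h2 - (b₁^2+b₂^2)*h1

lemma witt1 (a₁ b₁ : k) (h1 : a₁^2 = 1) (h2 : a₁*b₁ = 0) : b₁ = 0 := by
  have : a₁ ≠ 0 := by
    intro h
    rw [h] at h1
    simp at h1
  exact (mul_eq_zero.mp h2).resolve_left this


end Cassels


-- variants of coefficient extraction for 1 and 2 squares
section CoeffVar
variable {k : Type} [Field k]

lemma coeffs_of_sq1 [CharZero k] (a₁ b₁ c : k)
    (hEq : X^2 + C c = (C a₁ * X + C b₁)^2) :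
    a₁^2 = 1 ∧ a₁*b₁ = 0 ∧ b₁^2 = c := by
  rw [expand_sq] at hEq
  have h2 := congrArg (fun q => coeff q 2) hEq
  have h1 := congrArg (fun q => coeff q 1) hEq
  have h0 := congrArg (fun q => coeff q 0) hEq
  simp only [coeff_add, coeff_C_mul, coeff_X_pow, coeff_X, coeff_C] at h2 h1 h0
  norm_num at h2 h1 h0
  refine ⟨by linear_combination -h2, ?_, by linear_combination -h0⟩
  rcases h1 with h' | h' <;> rw [h'] <;> ring

lemma coeffs_of_sq2 [CharZero k] (a₁ b₁ a₂ b₂ c : k)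
    (hEq : X^2 + C c = (C a₁ * X + C b₁)^2 + (C a₂*X + C b₂)^2) :
    a₁^2+a₂^2 = 1 ∧ a₁*b₁+a₂*b₂ = 0 ∧ b₁^2+b₂^2 = c := by
  rw [expand_sq, expand_sq] at hEq
  have h2 := congrArg (fun q => coeff q 2) hEq
  have h1 := congrArg (fun q => coeff q 1) hEq
  have h0 := congrArg (fun q => coeff q 0) hEq
  simp only [coeff_add, coeff_C_mul, coeff_X_pow, coeff_X, coeff_C] at h2 h1 h0
  norm_num at h2 h1 h0
  have hmid : (2:k) * (a₁*b₁+a₂*b₂) = 0 := by linear_combination -h1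
  rcases mul_eq_zero.mp hmid with h' | h'
  · exact absurd h' two_ne_zero
  · exact ⟨by linear_combination -h2, h', by linear_combination -h0⟩

end CoeffVar

-- the transfer map
noncomputable def Φ (n : ℕ) : MvPolynomial (Fin (n+1)) ℝ →+* Polynomial (K n) :=
  (Polynomial.mapRingHom (A n)).comp (MvPolynomial.finSuccEquiv ℝ n).toAlgHom.toRingHom

lemma Φ_apply {n : ℕ} (x : MvPolynomial (Fin (n+1)) ℝ) :
    Φ n x = Polynomial.map (A n) (MvPolynomial.finSuccEquiv ℝ n x) := rfl

lemma Φ_inj {n : ℕ} : Function.Injective (Φ n) := by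
  intro a b h
  rw [Φ_apply, Φ_apply] at h
  exact (MvPolynomial.finSuccEquiv ℝ n).injective (Polynomial.map_injective _ A_inj h)

lemma Φ_X_zero {n : ℕ} : Φ n (MvPolynomial.X 0) = Polynomial.X := by
  simp [Φ, MvPolynomial.finSuccEquiv_X_zero]

lemma Φ_X_succ {n : ℕ} (i : Fin n) :
    Φ n (MvPolynomial.X i.succ) = Polynomial.C (A n (MvPolynomial.X i)) := by
  simp [Φ, MvPolynomial.finSuccEquiv_X_succ]

lemma Φ_dP (n : ℕ) : Φ n (dP (n+1)) = Polynomial.X^2 + Polynomial.C (A n (dP n)) := by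
  rw [dP, Fin.sum_univ_succ, map_add, map_pow, Φ_X_zero]
  congr 1
  rw [map_sum]
  rw [dP, map_sum, map_sum]
  apply Finset.sum_congr rfl
  intro i _
  rw [map_pow, Φ_X_succ, ← Polynomial.C_pow, ← map_pow]

lemma hreal_K (n : ℕ) : ∀ x y z : K n, x^2+y^2+z^2 = 0 → x = 0 ∧ y = 0 ∧ z = 0 :=
  fun x y z h => frac_sq3 x y z h

theorem T5 (S C₁ : MvPolynomial (Fin 5) ℝ) (hS : S ≠ 0) (hE : dP 5 * S^2 = C₁^2) : False := by
  have hIm := congrArg (Φ 4) hE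
  rw [map_mul, map_pow, map_pow, Φ_dP] at hIm
  have hf0 : Φ 4 S ≠ 0 := fun h => hS (Φ_inj (by rw [h, map_zero]))
  obtain ⟨g, hg⟩ := cassels1 (hreal_K 4) _ ((Φ 4 S).natDegree) (Φ 4 S) (Φ 4 C₁) le_rfl hf0 hIm
  have hdeg := natdeg_le_one_of_sq3 (hreal_K 4)
    (g₁ := g) (g₂ := 0) (g₃ := 0) (c := A 4 (dP 4)) (by rw [hg]; ring)
  have hgform := eq_X_add_C_of_natDegree_le_one hdeg.1
  rw [hgform] at hg
  obtain ⟨h1, h2, h3⟩ := coeffs_of_sq1 _ _ _ hg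
  have hb := witt1 _ _ h1 h2
  rw [hb] at h3
  have : dP 4 = 0 := A_eq_zero (by rw [← h3]; ring)
  exact dP_ne_zero (by norm_num) this

theorem T6 (S C₁ C₂ : MvPolynomial (Fin 6) ℝ) (hS : S ≠ 0)
    (hE : dP 6 * S^2 = C₁^2 + C₂^2) : False := by
  have hIm := congrArg (Φ 5) hE
  rw [map_mul, map_pow, map_add, map_pow, map_pow, Φ_dP] at hIm
  have hf0 : Φ 5 S ≠ 0 := fun h => hS (Φ_inj (by rw [h, map_zero]))
  obtain ⟨g₁, g₂, hg⟩ := cassels2 (hreal_K 5) _ ((Φ 5 S).natDegree) (Φ 5 S) (Φ 5 C₁) (Φ 5 C₂)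
    le_rfl hf0 hIm
  have hdeg := natdeg_le_one_of_sq3 (hreal_K 5)
    (g₁ := g₁) (g₂ := g₂) (g₃ := 0) (c := A 5 (dP 5)) (by rw [hg]; ring)
  have hgform₁ := eq_X_add_C_of_natDegree_le_one hdeg.1
  have hgform₂ := eq_X_add_C_of_natDegree_le_one hdeg.2.1
  rw [hgform₁, hgform₂] at hg
  obtain ⟨h1, h2, h3⟩ := coeffs_of_sq2 _ _ _ _ _ hg
  obtain ⟨s, hs⟩ := witt2 _ _ _ _ h1 h2
  -- A 5 (dP 5) = s^2 : clear denominators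
  obtain ⟨u, e, he, hue⟩ := frac_rep s
  have key : A 5 (dP 5 * e^2) = A 5 (u^2) := by
    rw [map_mul, map_pow, map_pow, ← h3, hs, ← hue]
    ring
  have hpoly : dP 5 * e^2 = u^2 := A_inj key
  exact T5 e u he hpoly

theorem T7 (S C₁ C₂ C₃ : MvPolynomial (Fin 7) ℝ) (hS : S ≠ 0)
    (hE : dP 7 * S^2 = C₁^2 + C₂^2 + C₃^2) : False := by
  have hIm := congrArg (Φ 6) hE
  rw [map_mul, map_pow, map_add, map_add, map_pow, map_pow, map_pow, Φ_dP] at hIm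
  have hf0 : Φ 6 S ≠ 0 := fun h => hS (Φ_inj (by rw [h, map_zero]))
  obtain ⟨g₁, g₂, g₃, hg⟩ := cassels3 (hreal_K 6) _ ((Φ 6 S).natDegree) (Φ 6 S) (Φ 6 C₁)
    (Φ 6 C₂) (Φ 6 C₃) le_rfl hf0 hIm
  have hdeg := natdeg_le_one_of_sq3 (hreal_K 6) (c := A 6 (dP 6)) hg
  have hgform₁ := eq_X_add_C_of_natDegree_le_one hdeg.1
  have hgform₂ := eq_X_add_C_of_natDegree_le_one hdeg.2.1
  have hgform₃ := eq_X_add_C_of_natDegree_le_one hdeg.2.2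
  rw [hgform₁, hgform₂, hgform₃] at hg
  obtain ⟨h1, h2, h3⟩ := coeffs_of_sq3 _ _ _ _ _ _ _ hg
  obtain ⟨s, t, hst⟩ := witt3 (hreal_K 6) _ _ _ _ _ _ h1 h2
  obtain ⟨us, es, hes, hues⟩ := frac_rep s
  obtain ⟨ut, et, het, huet⟩ := frac_rep t
  have key : A 6 (dP 6 * (es*et)^2) = A 6 ((us*et)^2 + (ut*es)^2) := by
    rw [map_mul, map_pow, map_add, map_pow, map_pow, map_mul, map_mul, map_mul,
      ← h3, hst, ← hues, ← huet]
    ring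
  have hpoly : dP 6 * (es*et)^2 = (us*et)^2 + (ut*es)^2 := A_inj key
  exact T6 (es*et) (us*et) (ut*es) (mul_ne_zero hes het) hpoly


-- ### The quadratic extension L = K₇(√-d)

noncomputable def fpoly (d : K 7) : Polynomial (K 7) := Polynomial.X^2 + Polynomial.C d

lemma fpoly_monic (d : K 7) : (fpoly d).Monic :=
  monic_X_pow_add (by simpa using degree_C_le.trans_lt (by norm_num))

lemma fpoly_degree (d : K 7) : (fpoly d).degree = 2 := degree_X_pow_add_C (by norm_num) d

noncomputable instance (d : K 7) : Nontrivial (AdjoinRoot (fpoly d)) :=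
  AdjoinRoot.nontrivial _ (by rw [fpoly_degree]; norm_num)

lemma hroot (d : K 7) :
    (AdjoinRoot.root (fpoly d))^2 = - (algebraMap (K 7) (AdjoinRoot (fpoly d)) d) := by
  have h : Polynomial.eval₂ (AdjoinRoot.of (fpoly d)) (AdjoinRoot.root (fpoly d))
      (Polynomial.X^2 + Polynomial.C d) = 0 := AdjoinRoot.eval₂_root (fpoly d)
  rw [eval₂_add, eval₂_pow, eval₂_X, eval₂_C] at h
  rw [AdjoinRoot.algebraMap_eq]
  linear_combination h

lemma B_inj (d : K 7) : Function.Injective (algebraMap (K 7) (AdjoinRoot (fpoly d))) :=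
  (algebraMap (K 7) (AdjoinRoot (fpoly d))).injective

lemma reprL (d : K 7) (z : AdjoinRoot (fpoly d)) :
    ∃ p q : K 7, z = algebraMap (K 7) _ p + algebraMap (K 7) _ q * AdjoinRoot.root (fpoly d) := by
  obtain ⟨g, rfl⟩ := AdjoinRoot.mk_surjective z
  have hmod : AdjoinRoot.mk (fpoly d) g = AdjoinRoot.mk (fpoly d) (g %ₘ fpoly d) := by
    conv_lhs => rw [← modByMonic_add_div g (fpoly d)]
    rw [map_add, map_mul, AdjoinRoot.mk_self, zero_mul, add_zero]
  have hdeg : (g %ₘ fpoly d).natDegree ≤ 1 := by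
    have h1 := degree_modByMonic_lt g (fpoly_monic d)
    rw [fpoly_degree] at h1
    exact natDegree_le_iff_degree_le.mpr (by exact_mod_cast Order.le_of_lt_succ (by exact_mod_cast h1))
  obtain ⟨a, b, hab⟩ : ∃ a b : K 7, g %ₘ fpoly d = C b * X + C a :=
    ⟨(g %ₘ fpoly d).coeff 0, (g %ₘ fpoly d).coeff 1, eq_X_add_C_of_natDegree_le_one hdeg⟩
  refine ⟨a, b, ?_⟩
  rw [hmod, hab]
  rw [map_add, map_mul, AdjoinRoot.mk_C, AdjoinRoot.mk_C, AdjoinRoot.mk_X]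
  rw [AdjoinRoot.algebraMap_eq]
  ring

-- linear independence of 1, θ over K 7 for d = image of dP 7
lemma indepL (r s : K 7)
    (h : algebraMap (K 7) (AdjoinRoot (fpoly (A 7 (dP 7)))) r
        + algebraMap (K 7) _ s * AdjoinRoot.root (fpoly (A 7 (dP 7))) = 0) :
    r = 0 ∧ s = 0 := by
  have hθ := hroot (A 7 (dP 7))
  have key : algebraMap (K 7) (AdjoinRoot (fpoly (A 7 (dP 7)))) (r^2 + A 7 (dP 7) * s^2) = 0 := by
    have h2 : (algebraMap (K 7) (AdjoinRoot (fpoly (A 7 (dP 7)))) r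
          + algebraMap (K 7) _ s * AdjoinRoot.root (fpoly (A 7 (dP 7))))
        * (algebraMap (K 7) (AdjoinRoot (fpoly (A 7 (dP 7)))) r
          - algebraMap (K 7) _ s * AdjoinRoot.root (fpoly (A 7 (dP 7)))) = 0 := by
      rw [h, zero_mul]
    rw [map_add, map_mul, map_pow, map_pow]
    linear_combination h2 + (algebraMap (K 7) (AdjoinRoot (fpoly (A 7 (dP 7)))) s)^2 * hθ
  have hzero : r^2 + A 7 (dP 7) * s^2 = 0 := B_inj _ (by rw [key, map_zero])
  exact frac_sq_d (by norm_num) r s hzero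


-- ### Lower bound: no sum of 3 squares equals -1 in L

lemma lower : ¬ ∃ f : Fin 3 → AdjoinRoot (fpoly (A 7 (dP 7))), ∑ i, (f i)^2 = -1 := by
  rintro ⟨f, hf⟩
  rw [Fin.sum_univ_three] at hf
  obtain ⟨p₁, q₁, h₁⟩ := reprL (A 7 (dP 7)) (f 0)
  obtain ⟨p₂, q₂, h₂⟩ := reprL (A 7 (dP 7)) (f 1)
  obtain ⟨p₃, q₃, h₃⟩ := reprL (A 7 (dP 7)) (f 2)
  rw [h₁, h₂, h₃] at hf
  have hθ := hroot (A 7 (dP 7))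
  have hlin := indepL (p₁^2+p₂^2+p₃^2 - (A 7 (dP 7))*(q₁^2+q₂^2+q₃^2) + 1)
      (2*(p₁*q₁+p₂*q₂+p₃*q₃)) (by
    simp only [map_add, map_sub, map_mul, map_pow, map_one, map_ofNat]
    linear_combination hf - ((algebraMap (K 7) (AdjoinRoot (fpoly (A 7 (dP 7)))) q₁)^2
      + (algebraMap (K 7) (AdjoinRoot (fpoly (A 7 (dP 7)))) q₂)^2
      + (algebraMap (K 7) (AdjoinRoot (fpoly (A 7 (dP 7)))) q₃)^2) * hθ)
  have E1 := hlin.1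
  have E2 := hlin.2
  have hO : p₁*q₁+p₂*q₂+p₃*q₃ = 0 := by
    have h2ne : (2 : K 7) ≠ 0 := two_ne_zero
    exact (mul_eq_zero.mp E2).resolve_left h2ne
  have hS : 1 + (p₁^2+p₂^2+p₃^2) = A 7 (dP 7) * (q₁^2+q₂^2+q₃^2) := by
    linear_combination E1
  have hSne : (q₁^2+q₂^2+q₃^2 : K 7) ≠ 0 := by
    intro h0
    rw [h0, mul_zero] at hS
    have h4 := frac_sq4 1 p₁ p₂ p₃ (by linear_combination hS)
    exact one_ne_zero h4.1
  have hq : A 7 (dP 7) * (q₁^2+q₂^2+q₃^2)^2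
      = (q₁ + (p₂*q₃ - p₃*q₂))^2 + (q₂ + (p₃*q₁ - p₁*q₃))^2 + (q₃ + (p₁*q₂ - p₂*q₁))^2 := by
    linear_combination (-(q₁^2+q₂^2+q₃^2))*hS + (p₁*q₁+p₂*q₂+p₃*q₃)*hO
  -- clear denominators
  obtain ⟨u₁, e₁, he₁, hue₁⟩ := frac_rep (q₁ + (p₂*q₃ - p₃*q₂))
  obtain ⟨u₂, e₂, he₂, hue₂⟩ := frac_rep (q₂ + (p₃*q₁ - p₁*q₃))
  obtain ⟨u₃, e₃, he₃, hue₃⟩ := frac_rep (q₃ + (p₁*q₂ - p₂*q₁))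
  obtain ⟨uS, eS, heS, hueS⟩ := frac_rep (q₁^2+q₂^2+q₃^2)
  have huSne : uS ≠ 0 := by
    intro h0
    rw [h0, map_zero] at hueS
    rcases mul_eq_zero.mp hueS with h' | h'
    · exact hSne h'
    · exact heS (A_eq_zero h')
  have key : A 7 (dP 7 * (uS*(e₁*e₂*e₃))^2)
      = A 7 ((u₁*(eS*(e₂*e₃)))^2 + (u₂*(eS*(e₁*e₃)))^2 + (u₃*(eS*(e₁*e₂)))^2) := by
    simp only [map_add, map_mul, map_pow]
    rw [← hue₁, ← hue₂, ← hue₃, ← hueS]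
    linear_combination ((A 7 eS)*(A 7 e₁)*(A 7 e₂)*(A 7 e₃))^2 * hq
  have hpoly : dP 7 * (uS*(e₁*e₂*e₃))^2
      = (u₁*(eS*(e₂*e₃)))^2 + (u₂*(eS*(e₁*e₃)))^2 + (u₃*(eS*(e₁*e₂)))^2 := A_inj key
  exact T7 _ _ _ _ (mul_ne_zero huSne (by simp [he₁, he₂, he₃])) hpoly

-- ### Upper bound

lemma upper_generic {R : Type} [CommRing R] (x0 x1 x2 x3 x4 x5 x6 t w : R)
    (hθ : t^2 = -(x0^2+x1^2+x2^2+x3^2+x4^2+x5^2+x6^2))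
    (hw : w * (x0^2+x1^2+x2^2+x3^2) = 1) :
    (w*(x1*x4+x2*x5+x3*x6) + w*x0*t)^2
    + (w*(-(x0*x4+x3*x5-x2*x6)) + w*x1*t)^2
    + (w*(-(-(x3*x4)+x0*x5+x1*x6)) + w*x2*t)^2
    + (w*(-(x2*x4-x1*x5+x0*x6)) + w*x3*t)^2 = -1 := by
  linear_combination (w^2*(x0^2+x1^2+x2^2+x3^2))*hθ - (1 + w*(x0^2+x1^2+x2^2+x3^2))*hw

lemma upper : ∃ f : Fin 4 → AdjoinRoot (fpoly (A 7 (dP 7))), ∑ i, (f i)^2 = -1 := by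
  set α : K 7 := A 7 ((MvPolynomial.X 0)^2+(MvPolynomial.X 1)^2+(MvPolynomial.X 2)^2
      +(MvPolynomial.X 3)^2) with hαdef
  have hα : α ≠ 0 := by
    intro h0
    have hP := A_eq_zero h0
    have hev := congrArg (MvPolynomial.eval (fun _ => (1:ℝ))) hP
    simp [MvPolynomial.eval_X] at hev
    norm_num at hev
  have hA : A 7 (dP 7) = (A 7 (MvPolynomial.X 0))^2 + (A 7 (MvPolynomial.X 1))^2
      + (A 7 (MvPolynomial.X 2))^2 + (A 7 (MvPolynomial.X 3))^2 + (A 7 (MvPolynomial.X 4))^2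
      + (A 7 (MvPolynomial.X 5))^2 + (A 7 (MvPolynomial.X 6))^2 := by
    rw [dP, map_sum, Fin.sum_univ_seven]
    simp only [map_pow]
  have hBA : algebraMap (K 7) (AdjoinRoot (fpoly (A 7 (dP 7)))) (A 7 (dP 7))
      = (algebraMap (K 7) (AdjoinRoot (fpoly (A 7 (dP 7)))) (A 7 (MvPolynomial.X 0)))^2+(algebraMap (K 7) (AdjoinRoot (fpoly (A 7 (dP 7)))) (A 7 (MvPolynomial.X 1)))^2+(algebraMap (K 7) (AdjoinRoot (fpoly (A 7 (dP 7)))) (A 7 (MvPolynomial.X 2)))^2+(algebraMap (K 7) (AdjoinRoot (fpoly (A 7 (dP 7)))) (A 7 (MvPolynomial.X 3)))^2+(algebraMap (K 7) (AdjoinRoot (fpoly (A 7 (dP 7)))) (A 7 (MvPolynomial.X 4)))^2+(algebraMap (K 7) (AdjoinRoot (fpoly (A 7 (dP 7)))) (A 7 (MvPolynomial.X 5)))^2+(algebraMap (K 7) (AdjoinRoot (fpoly (A 7 (dP 7)))) (A 7 (MvPolynomial.X 6)))^2 := by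
    have hBA' := congrArg (fun z : K 7 => algebraMap (K 7) (AdjoinRoot (fpoly (A 7 (dP 7)))) z) hA
    simp only [map_add, map_pow] at hBA'
    exact hBA'
  have hθ : (AdjoinRoot.root (fpoly (A 7 (dP 7))))^2
      = -((algebraMap (K 7) (AdjoinRoot (fpoly (A 7 (dP 7)))) (A 7 (MvPolynomial.X 0)))^2+(algebraMap (K 7) (AdjoinRoot (fpoly (A 7 (dP 7)))) (A 7 (MvPolynomial.X 1)))^2+(algebraMap (K 7) (AdjoinRoot (fpoly (A 7 (dP 7)))) (A 7 (MvPolynomial.X 2)))^2+(algebraMap (K 7) (AdjoinRoot (fpoly (A 7 (dP 7)))) (A 7 (MvPolynomial.X 3)))^2+(algebraMap (K 7) (AdjoinRoot (fpoly (A 7 (dP 7)))) (A 7 (MvPolynomial.X 4)))^2+(algebraMap (K 7) (AdjoinRoot (fpoly (A 7 (dP 7)))) (A 7 (MvPolynomial.X 5)))^2+(algebraMap (K 7) (AdjoinRoot (fpoly (A 7 (dP 7)))) (A 7 (MvPolynomial.X 6)))^2) := by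
    rw [hroot, hBA]
  have hw : (algebraMap (K 7) (AdjoinRoot (fpoly (A 7 (dP 7)))) α⁻¹) * ((algebraMap (K 7) (AdjoinRoot (fpoly (A 7 (dP 7)))) (A 7 (MvPolynomial.X 0)))^2+(algebraMap (K 7) (AdjoinRoot (fpoly (A 7 (dP 7)))) (A 7 (MvPolynomial.X 1)))^2+(algebraMap (K 7) (AdjoinRoot (fpoly (A 7 (dP 7)))) (A 7 (MvPolynomial.X 2)))^2+(algebraMap (K 7) (AdjoinRoot (fpoly (A 7 (dP 7)))) (A 7 (MvPolynomial.X 3)))^2) = 1 := by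
    have hsum : (algebraMap (K 7) (AdjoinRoot (fpoly (A 7 (dP 7)))) (A 7 (MvPolynomial.X 0)))^2+(algebraMap (K 7) (AdjoinRoot (fpoly (A 7 (dP 7)))) (A 7 (MvPolynomial.X 1)))^2+(algebraMap (K 7) (AdjoinRoot (fpoly (A 7 (dP 7)))) (A 7 (MvPolynomial.X 2)))^2+(algebraMap (K 7) (AdjoinRoot (fpoly (A 7 (dP 7)))) (A 7 (MvPolynomial.X 3)))^2 = algebraMap (K 7) (AdjoinRoot (fpoly (A 7 (dP 7)))) α := by
      rw [hαdef]
      simp only [map_add, map_pow]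
    rw [hsum, ← map_mul, inv_mul_cancel₀ hα, map_one]
  refine ⟨![(algebraMap (K 7) (AdjoinRoot (fpoly (A 7 (dP 7)))) α⁻¹)*((algebraMap (K 7) (AdjoinRoot (fpoly (A 7 (dP 7)))) (A 7 (MvPolynomial.X 1)))*(algebraMap (K 7) (AdjoinRoot (fpoly (A 7 (dP 7)))) (A 7 (MvPolynomial.X 4)))+(algebraMap (K 7) (AdjoinRoot (fpoly (A 7 (dP 7)))) (A 7 (MvPolynomial.X 2)))*(algebraMap (K 7) (AdjoinRoot (fpoly (A 7 (dP 7)))) (A 7 (MvPolynomial.X 5)))+(algebraMap (K 7) (AdjoinRoot (fpoly (A 7 (dP 7)))) (A 7 (MvPolynomial.X 3)))*(algebraMap (K 7) (AdjoinRoot (fpoly (A 7 (dP 7)))) (A 7 (MvPolynomial.X 6)))) + (algebraMap (K 7) (AdjoinRoot (fpoly (A 7 (dP 7)))) α⁻¹)*(algebraMap (K 7) (AdjoinRoot (fpoly (A 7 (dP 7)))) (A 7 (MvPolynomial.X 0)))*(AdjoinRoot.root (fpoly (A 7 (dP 7)))),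
            (algebraMap (K 7) (AdjoinRoot (fpoly (A 7 (dP 7)))) α⁻¹)*(-((algebraMap (K 7) (AdjoinRoot (fpoly (A 7 (dP 7)))) (A 7 (MvPolynomial.X 0)))*(algebraMap (K 7) (AdjoinRoot (fpoly (A 7 (dP 7)))) (A 7 (MvPolynomial.X 4)))+(algebraMap (K 7) (AdjoinRoot (fpoly (A 7 (dP 7)))) (A 7 (MvPolynomial.X 3)))*(algebraMap (K 7) (AdjoinRoot (fpoly (A 7 (dP 7)))) (A 7 (MvPolynomial.X 5)))-(algebraMap (K 7) (AdjoinRoot (fpoly (A 7 (dP 7)))) (A 7 (MvPolynomial.X 2)))*(algebraMap (K 7) (AdjoinRoot (fpoly (A 7 (dP 7)))) (A 7 (MvPolynomial.X 6))))) + (algebraMap (K 7) (AdjoinRoot (fpoly (A 7 (dP 7)))) α⁻¹)*(algebraMap (K 7) (AdjoinRoot (fpoly (A 7 (dP 7)))) (A 7 (MvPolynomial.X 1)))*(AdjoinRoot.root (fpoly (A 7 (dP 7)))),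
            (algebraMap (K 7) (AdjoinRoot (fpoly (A 7 (dP 7)))) α⁻¹)*(-(-((algebraMap (K 7) (AdjoinRoot (fpoly (A 7 (dP 7)))) (A 7 (MvPolynomial.X 3)))*(algebraMap (K 7) (AdjoinRoot (fpoly (A 7 (dP 7)))) (A 7 (MvPolynomial.X 4))))+(algebraMap (K 7) (AdjoinRoot (fpoly (A 7 (dP 7)))) (A 7 (MvPolynomial.X 0)))*(algebraMap (K 7) (AdjoinRoot (fpoly (A 7 (dP 7)))) (A 7 (MvPolynomial.X 5)))+(algebraMap (K 7) (AdjoinRoot (fpoly (A 7 (dP 7)))) (A 7 (MvPolynomial.X 1)))*(algebraMap (K 7) (AdjoinRoot (fpoly (A 7 (dP 7)))) (A 7 (MvPolynomial.X 6))))) + (algebraMap (K 7) (AdjoinRoot (fpoly (A 7 (dP 7)))) α⁻¹)*(algebraMap (K 7) (AdjoinRoot (fpoly (A 7 (dP 7)))) (A 7 (MvPolynomial.X 2)))*(AdjoinRoot.root (fpoly (A 7 (dP 7)))),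
            (algebraMap (K 7) (AdjoinRoot (fpoly (A 7 (dP 7)))) α⁻¹)*(-((algebraMap (K 7) (AdjoinRoot (fpoly (A 7 (dP 7)))) (A 7 (MvPolynomial.X 2)))*(algebraMap (K 7) (AdjoinRoot (fpoly (A 7 (dP 7)))) (A 7 (MvPolynomial.X 4)))-(algebraMap (K 7) (AdjoinRoot (fpoly (A 7 (dP 7)))) (A 7 (MvPolynomial.X 1)))*(algebraMap (K 7) (AdjoinRoot (fpoly (A 7 (dP 7)))) (A 7 (MvPolynomial.X 5)))+(algebraMap (K 7) (AdjoinRoot (fpoly (A 7 (dP 7)))) (A 7 (MvPolynomial.X 0)))*(algebraMap (K 7) (AdjoinRoot (fpoly (A 7 (dP 7)))) (A 7 (MvPolynomial.X 6))))) + (algebraMap (K 7) (AdjoinRoot (fpoly (A 7 (dP 7)))) α⁻¹)*(algebraMap (K 7) (AdjoinRoot (fpoly (A 7 (dP 7)))) (A 7 (MvPolynomial.X 3)))*(AdjoinRoot.root (fpoly (A 7 (dP 7))))], ?_⟩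
  rw [Fin.sum_univ_four]
  simp only [Matrix.cons_val_zero, Matrix.cons_val_one, Matrix.head_cons,
    Matrix.cons_val_two, Matrix.tail_cons, Matrix.cons_val_three]
  exact upper_generic (algebraMap (K 7) (AdjoinRoot (fpoly (A 7 (dP 7)))) (A 7 (MvPolynomial.X 0))) (algebraMap (K 7) (AdjoinRoot (fpoly (A 7 (dP 7)))) (A 7 (MvPolynomial.X 1))) (algebraMap (K 7) (AdjoinRoot (fpoly (A 7 (dP 7)))) (A 7 (MvPolynomial.X 2))) (algebraMap (K 7) (AdjoinRoot (fpoly (A 7 (dP 7)))) (A 7 (MvPolynomial.X 3))) (algebraMap (K 7) (AdjoinRoot (fpoly (A 7 (dP 7)))) (A 7 (MvPolynomial.X 4))) (algebraMap (K 7) (AdjoinRoot (fpoly (A 7 (dP 7)))) (A 7 (MvPolynomial.X 5))) (algebraMap (K 7) (AdjoinRoot (fpoly (A 7 (dP 7)))) (A 7 (MvPolynomial.X 6))) (AdjoinRoot.root (fpoly (A 7 (dP 7)))) (algebraMap (K 7) (AdjoinRoot (fpoly (A 7 (dP 7)))) α⁻¹) hθ hw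

end SL7

theorem stmt6 :
    (∃ f : Fin 4 →
        AdjoinRoot (Polynomial.X ^ 2 +
          Polynomial.C (algebraMap (MvPolynomial (Fin 7) ℝ)
            (FractionRing (MvPolynomial (Fin 7) ℝ))
            (∑ i : Fin 7, MvPolynomial.X i ^ 2))),
      ∑ i, (f i) ^ 2 = -1) ∧
    ¬ (∃ f : Fin 3 →
        AdjoinRoot (Polynomial.X ^ 2 +
          Polynomial.C (algebraMap (MvPolynomial (Fin 7) ℝ)
            (FractionRing (MvPolynomial (Fin 7) ℝ))
            (∑ i : Fin 7, MvPolynomial.X i ^ 2))),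
      ∑ i, (f i) ^ 2 = -1) :=
  ⟨SL7.upper, SL7.lower⟩
end

section
/- If a₁,...,a₄ are real polynomials in 8 variables x₁,...,x₈ such that a₁² + a₂² + a₃² + a₄² is divisible by ‖X‖² = x₁²+...+x₈², then each a_j is divisible by ‖X‖². -/
set_option maxHeartbeats 1000000

open MvPolynomial Polynomial

-- formally real: sums of squares of real mv-polynomials
lemma fr_mv {n m : ℕ} (f : Fin m → MvPolynomial (Fin n) ℝ)
    (h : ∑ i, f i ^ 2 = 0) : ∀ i, f i = 0 := by
  intro i
  apply MvPolynomial.funext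
  intro x
  have hx : ∑ j, (MvPolynomial.eval x (f j)) ^ 2 = 0 := by
    have := congrArg (MvPolynomial.eval x) h
    simpa using this
  have : ∀ j ∈ Finset.univ, (MvPolynomial.eval x (f j)) ^ 2 = 0 := by
    intro j _
    have hnn : ∀ j ∈ (Finset.univ : Finset (Fin m)), 0 ≤ (MvPolynomial.eval x (f j)) ^ 2 :=
      fun j _ => sq_nonneg _
    exact (Finset.sum_eq_zero_iff_of_nonneg hnn).1 hx j (Finset.mem_univ j)
  have := this i (Finset.mem_univ i)
  simpa using pow_eq_zero_iff (n := 2) (by norm_num) |>.1 this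

noncomputable section

abbrev R6 : Type := MvPolynomial (Fin 6) ℝ
abbrev K6 : Type := FractionRing R6

lemma inj6 : Function.Injective (algebraMap R6 K6) := IsFractionRing.injective R6 K6

instance : Infinite K6 := Infinite.of_injective _ inj6

lemma frK3 (a b c : K6) (h : a ^ 2 + b ^ 2 + c ^ 2 = 0) : a = 0 ∧ b = 0 ∧ c = 0 := by
  obtain ⟨pa, qa, hqa, rfl⟩ := IsFractionRing.div_surjective (A := R6) a
  obtain ⟨pb, qb, hqb, rfl⟩ := IsFractionRing.div_surjective (A := R6) b
  obtain ⟨pc, qc, hqc, rfl⟩ := IsFractionRing.div_surjective (A := R6) c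
  have hqa0 : qa ≠ 0 := nonZeroDivisors.ne_zero hqa
  have hqb0 : qb ≠ 0 := nonZeroDivisors.ne_zero hqb
  have hqc0 : qc ≠ 0 := nonZeroDivisors.ne_zero hqc
  set φ := algebraMap R6 K6
  have ha : φ qa ≠ 0 := fun h0 => hqa0 (inj6 (by simpa using h0 : φ qa = φ 0))
  have hb : φ qb ≠ 0 := fun h0 => hqb0 (inj6 (by simpa using h0 : φ qb = φ 0))
  have hc : φ qc ≠ 0 := fun h0 => hqc0 (inj6 (by simpa using h0 : φ qc = φ 0))
  have key : φ ((pa * qb * qc) ^ 2 + (pb * qa * qc) ^ 2 + (pc * qa * qb) ^ 2) = φ 0 := by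
    field_simp at h
    simp only [map_add, map_mul, map_pow, map_zero]
    linear_combination h
  have key2 : (pa * qb * qc) ^ 2 + (pb * qa * qc) ^ 2 + (pc * qa * qb) ^ 2 = 0 := inj6 key
  have h3 : ∀ i, ![pa * qb * qc, pb * qa * qc, pc * qa * qb] i = 0 := by
    apply fr_mv
    rw [Fin.sum_univ_three]
    simpa using key2
  have e1 := h3 0; have e2 := h3 1; have e3 := h3 2
  simp only [Matrix.cons_val_zero, Matrix.cons_val_one, Matrix.head_cons,
    Matrix.cons_val_two, Matrix.tail_cons] at e1 e2 e3
  refine ⟨?_, ?_, ?_⟩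
  · rcases mul_eq_zero.1 ((mul_eq_zero.1 e1).resolve_right hqc0) with h' | h'
    · simp [h', map_zero]
    · exact absurd h' hqb0
  · rcases mul_eq_zero.1 ((mul_eq_zero.1 e2).resolve_right hqc0) with h' | h'
    · simp [h', map_zero]
    · exact absurd h' hqa0
  · rcases mul_eq_zero.1 ((mul_eq_zero.1 e3).resolve_right hqb0) with h' | h'
    · simp [h', map_zero]
    · exact absurd h' hqa0

lemma frK2 (a b : K6) (h : a ^ 2 + b ^ 2 = 0) : a = 0 ∧ b = 0 := by
  have := frK3 a b 0 (by linear_combination h)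
  exact ⟨this.1, this.2.1⟩

lemma polyFR3 (f1 f2 f3 : Polynomial K6) (h : f1 ^ 2 + f2 ^ 2 + f3 ^ 2 = 0) :
    f1 = 0 ∧ f2 = 0 ∧ f3 = 0 := by
  have hz : ∀ g : Polynomial K6, (∀ x, Polynomial.eval x g = 0) → g = 0 :=
    fun g hg => Polynomial.zero_of_eval_zero g hg
  have key : ∀ x : K6, Polynomial.eval x f1 = 0 ∧ Polynomial.eval x f2 = 0 ∧
      Polynomial.eval x f3 = 0 := by
    intro x
    have := congrArg (Polynomial.eval x) h
    simp only [Polynomial.eval_add, Polynomial.eval_pow, Polynomial.eval_zero] at this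
    exact frK3 _ _ _ this
  exact ⟨hz _ fun x => (key x).1, hz _ fun x => (key x).2.1, hz _ fun x => (key x).2.2⟩

/-- Cassels' theorem for sums of three squares, over K6. -/
lemma cassels (p : Polynomial K6) :
    ∀ (h f1 f2 f3 : Polynomial K6), h ≠ 0 → p * h ^ 2 = f1 ^ 2 + f2 ^ 2 + f3 ^ 2 →
      ∃ g1 g2 g3 : Polynomial K6, p = g1 ^ 2 + g2 ^ 2 + g3 ^ 2 := by
  have main : ∀ N : ℕ, ∀ (h f1 f2 f3 : Polynomial K6), h.natDegree = N → h ≠ 0 →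
      p * h ^ 2 = f1 ^ 2 + f2 ^ 2 + f3 ^ 2 →
      ∃ g1 g2 g3 : Polynomial K6, p = g1 ^ 2 + g2 ^ 2 + g3 ^ 2 := by
    intro N
    induction N using Nat.strong_induction_on with
    | _ N IH =>
      intro h f1 f2 f3 hdeg hh heq
      rcases Nat.eq_zero_or_pos N with h0 | hpos
      · subst h0
        obtain ⟨c, hc⟩ := Polynomial.natDegree_eq_zero.1 hdeg
        have hc0 : c ≠ 0 := by
          rintro rfl; apply hh; rw [← hc, Polynomial.C_0]
        have hcc : (Polynomial.C c : Polynomial K6) * Polynomial.C c⁻¹ = 1 := by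
          rw [← Polynomial.C_mul, mul_inv_cancel₀ hc0, Polynomial.C_1]
        refine ⟨Polynomial.C c⁻¹ * f1, Polynomial.C c⁻¹ * f2, Polynomial.C c⁻¹ * f3, ?_⟩
        rw [← hc] at heq
        linear_combination (Polynomial.C c⁻¹) ^ 2 * heq -
          p * (Polynomial.C c * Polynomial.C c⁻¹ + 1) * hcc
      · set lc := h.leadingCoeff with hlcdef
        have hlc : lc ≠ 0 := Polynomial.leadingCoeff_ne_zero.2 hh
        have hmono : (h * Polynomial.C lc⁻¹).Monic := Polynomial.monic_mul_leadingCoeff_inv hh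
        set d1 := f1 /ₘ (h * Polynomial.C lc⁻¹) with hd1
        set d2 := f2 /ₘ (h * Polynomial.C lc⁻¹) with hd2
        set d3 := f3 /ₘ (h * Polynomial.C lc⁻¹) with hd3
        set q1 := Polynomial.C lc⁻¹ * d1 with hq1
        set q2 := Polynomial.C lc⁻¹ * d2 with hq2
        set q3 := Polynomial.C lc⁻¹ * d3 with hq3
        have hrem1 : f1 - h * q1 = f1 %ₘ (h * Polynomial.C lc⁻¹) := by
          have := Polynomial.modByMonic_add_div f1 (h * Polynomial.C lc⁻¹)
          rw [hq1]; linear_combination -this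
        have hrem2 : f2 - h * q2 = f2 %ₘ (h * Polynomial.C lc⁻¹) := by
          have := Polynomial.modByMonic_add_div f2 (h * Polynomial.C lc⁻¹)
          rw [hq2]; linear_combination -this
        have hrem3 : f3 - h * q3 = f3 %ₘ (h * Polynomial.C lc⁻¹) := by
          have := Polynomial.modByMonic_add_div f3 (h * Polynomial.C lc⁻¹)
          rw [hq3]; linear_combination -this
        have hdeg1 : (f1 - h * q1).degree < h.degree := by
          rw [hrem1, ← Polynomial.degree_mul_leadingCoeff_inv h hh]
          exact Polynomial.degree_modByMonic_lt f1 hmono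
        have hdeg2 : (f2 - h * q2).degree < h.degree := by
          rw [hrem2, ← Polynomial.degree_mul_leadingCoeff_inv h hh]
          exact Polynomial.degree_modByMonic_lt f2 hmono
        have hdeg3 : (f3 - h * q3).degree < h.degree := by
          rw [hrem3, ← Polynomial.degree_mul_leadingCoeff_inv h hh]
          exact Polynomial.degree_modByMonic_lt f3 hmono
        by_cases hS : (f1 - h * q1) ^ 2 + (f2 - h * q2) ^ 2 + (f3 - h * q3) ^ 2 = 0
        · obtain ⟨e1, e2, e3⟩ := polyFR3 _ _ _ hS
          have hf1 : f1 = h * q1 := by linear_combination e1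
          have hf2 : f2 = h * q2 := by linear_combination e2
          have hf3 : f3 = h * q3 := by linear_combination e3
          refine ⟨q1, q2, q3, ?_⟩
          have : h ^ 2 * p = h ^ 2 * (q1 ^ 2 + q2 ^ 2 + q3 ^ 2) := by
            rw [hf1, hf2, hf3] at heq; linear_combination heq
          exact mul_left_cancel₀ (pow_ne_zero 2 hh) this
        · set e := (q1 ^ 2 + q2 ^ 2 + q3 ^ 2) - p with he
          set Bq := (f1 * q1 + f2 * q2 + f3 * q3) - p * h with hB
          set h' := e * h - 2 * Bq with hh'
          have k1 : h * h' = (f1 - h * q1) ^ 2 + (f2 - h * q2) ^ 2 + (f3 - h * q3) ^ 2 := by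
            rw [hh', he, hB]; linear_combination heq
          have hh'0 : h' ≠ 0 := by
            intro h0; apply hS; rw [← k1, h0, mul_zero]
          have k2 : p * h' ^ 2 = (e * f1 - 2 * Bq * q1) ^ 2 + (e * f2 - 2 * Bq * q2) ^ 2 +
              (e * f3 - 2 * Bq * q3) ^ 2 := by
            rw [hh', he, hB]; linear_combination ((q1 ^ 2 + q2 ^ 2 + q3 ^ 2) - p) ^ 2 * heq
          -- degree bookkeeping
          have hdS : ((f1 - h * q1) ^ 2 + (f2 - h * q2) ^ 2 + (f3 - h * q3) ^ 2).natDegree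
              ≤ 2 * (N - 1) := by
            have bound : ∀ g : Polynomial K6, g.degree < h.degree → (g ^ 2).natDegree ≤ 2 * (N - 1) := by
              intro g hg
              rcases eq_or_ne g 0 with rfl | hg0
              · simp
              · have : g.natDegree < N := by
                  rw [← hdeg]; exact Polynomial.natDegree_lt_natDegree hg0 hg
                have : g.natDegree ≤ N - 1 := by omega
                calc (g ^ 2).natDegree = 2 * g.natDegree := by
                      rw [Polynomial.natDegree_pow]
                  _ ≤ 2 * (N - 1) := by omega
            calc ((f1 - h * q1) ^ 2 + (f2 - h * q2) ^ 2 + (f3 - h * q3) ^ 2).natDegree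
                ≤ max (((f1 - h * q1) ^ 2 + (f2 - h * q2) ^ 2).natDegree)
                  (((f3 - h * q3) ^ 2).natDegree) := Polynomial.natDegree_add_le _ _
              _ ≤ max (max (((f1 - h * q1) ^ 2).natDegree) (((f2 - h * q2) ^ 2).natDegree))
                  (((f3 - h * q3) ^ 2).natDegree) := by
                    exact max_le_max (Polynomial.natDegree_add_le _ _) le_rfl
              _ ≤ 2 * (N - 1) := by
                    exact max_le (max_le (bound _ hdeg1) (bound _ hdeg2)) (bound _ hdeg3)
          have hsum : h.natDegree + h'.natDegree =
              ((f1 - h * q1) ^ 2 + (f2 - h * q2) ^ 2 + (f3 - h * q3) ^ 2).natDegree := by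
            rw [← k1, Polynomial.natDegree_mul hh hh'0]
          have hlt : h'.natDegree < N := by
            rw [hdeg] at hsum; omega
          exact IH h'.natDegree hlt h' _ _ _ rfl hh'0 k2
  intro h f1 f2 f3 hh heq
  exact main h.natDegree h f1 f2 f3 rfl hh heq

abbrev S6 : Type := MvPolynomial (Fin 6) ℂ
abbrev T5 : Type := MvPolynomial (Fin 5) ℂ

lemma notSquare (u : T5) (hu : u ^ 2 = -(∑ i : Fin 5, X i ^ 2)) : False := by
  classical
  set φ : T5 →ₐ[ℂ] Polynomial ℂ :=
    MvPolynomial.aeval (fun i : Fin 5 => if i = 0 then Polynomial.X else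
      if i = 1 then 1 else 0) with hφ
  have himg : φ (∑ i : Fin 5, X i ^ 2) = Polynomial.X ^ 2 + 1 := by
    rw [Fin.sum_univ_five]
    simp [hφ]
  have hw : (φ u) ^ 2 = -(Polynomial.X ^ 2 + 1) := by
    rw [← himg, ← map_pow, hu, map_neg]
  -- degree of φ u is 1
  have hX1 : (Polynomial.X ^ 2 + 1 : Polynomial ℂ) = Polynomial.X ^ 2 + Polynomial.C 1 := by
    rw [Polynomial.C_1]
  have hdeg2 : (-(Polynomial.X ^ 2 + 1) : Polynomial ℂ).natDegree = 2 := by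
    rw [Polynomial.natDegree_neg, hX1, Polynomial.natDegree_X_pow_add_C]
  have hwdeg : (φ u).natDegree = 1 := by
    have := congrArg Polynomial.natDegree hw
    rw [Polynomial.natDegree_pow, hdeg2] at this
    omega
  set w := φ u with hwdef
  have hrep : w = Polynomial.C (w.coeff 1) * Polynomial.X + Polynomial.C (w.coeff 0) :=
    Polynomial.eq_X_add_C_of_natDegree_le_one (by omega)
  set a := w.coeff 1
  set b := w.coeff 0
  have evI : (Polynomial.eval Complex.I w) ^ 2 = 0 := by
    have := congrArg (Polynomial.eval Complex.I) hw
    simpa [Complex.I_sq] using this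
  have evmI : (Polynomial.eval (-Complex.I) w) ^ 2 = 0 := by
    have := congrArg (Polynomial.eval (-Complex.I)) hw
    simpa [Complex.I_sq] using this
  have e1 : a * Complex.I + b = 0 := by
    have := pow_eq_zero_iff (n := 2) (by norm_num) |>.1 evI
    rw [hrep] at this
    simpa using this
  have e2 : a * (-Complex.I) + b = 0 := by
    have := pow_eq_zero_iff (n := 2) (by norm_num) |>.1 evmI
    rw [hrep] at this
    simpa using this
  have hb : b = 0 := by linear_combination (e1 + e2) / 2
  have ha : a = 0 := by
    have : a * Complex.I = 0 := by linear_combination e1 - hb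
    rcases mul_eq_zero.1 this with h' | h'
    · exact h'
    · exact absurd h' Complex.I_ne_zero
  have hw0 : w = 0 := by rw [hrep, ha, hb]; simp
  have hcontra : (0 : Polynomial ℂ) = -(Polynomial.X ^ 2 + 1) := by
    rw [← hw, hw0]; ring
  have := congrArg Polynomial.natDegree hcontra
  rw [hdeg2, Polynomial.natDegree_zero] at this
  omega

lemma prime_q5 : Prime (Polynomial.X ^ 2 + Polynomial.C (∑ i : Fin 5, X i ^ 2) : Polynomial T5) := by
  set c : T5 := ∑ i : Fin 5, X i ^ 2 with hc
  set p : Polynomial T5 := Polynomial.X ^ 2 + Polynomial.C c with hp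
  have hmon : p.Monic := Polynomial.monic_X_pow_add_C c (by norm_num)
  have hdeg : p.natDegree = 2 := Polynomial.natDegree_X_pow_add_C
  have hp0 : p ≠ 0 := hmon.ne_zero
  have irr : Irreducible p := by
    constructor
    · intro hu
      have := Polynomial.natDegree_eq_zero_of_isUnit hu
      omega
    · intro f g hfg
      have hf0 : f ≠ 0 := by rintro rfl; rw [zero_mul] at hfg; exact hp0 hfg
      have hg0 : g ≠ 0 := by rintro rfl; rw [mul_zero] at hfg; exact hp0 hfg
      have hnd : f.natDegree + g.natDegree = 2 := by
        rw [← Polynomial.natDegree_mul hf0 hg0, ← hfg, hdeg]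
      have hlc : f.leadingCoeff * g.leadingCoeff = 1 := by
        rw [← Polynomial.leadingCoeff_mul, ← hfg]; exact hmon
      rcases Nat.eq_zero_or_pos f.natDegree with hf | hfpos
      · left
        rw [Polynomial.eq_C_of_natDegree_eq_zero hf]
        have : f.coeff 0 = f.leadingCoeff := by
          rw [Polynomial.leadingCoeff, hf]
        rw [this]
        exact Polynomial.isUnit_C.2 (IsUnit.of_mul_eq_one _ hlc)
      rcases Nat.eq_zero_or_pos g.natDegree with hg | hgpos
      · right
        rw [Polynomial.eq_C_of_natDegree_eq_zero hg]
        have : g.coeff 0 = g.leadingCoeff := by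
          rw [Polynomial.leadingCoeff, hg]
        rw [this]
        exact Polynomial.isUnit_C.2 (IsUnit.of_mul_eq_one _ (by rw [mul_comm]; exact hlc))
      exfalso
      have hf1 : f.natDegree = 1 := by omega
      set a := f.coeff 1 with hadef
      set b := f.coeff 0 with hbdef
      have hrep : f = Polynomial.C a * Polynomial.X + Polynomial.C b :=
        Polynomial.eq_X_add_C_of_natDegree_le_one (by omega)
      have halc : a = f.leadingCoeff := by
        rw [Polynomial.leadingCoeff, hf1]
      have hunit : IsUnit a := by
        rw [halc]; exact IsUnit.of_mul_eq_one _ hlc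
      obtain ⟨a', ha'⟩ := isUnit_iff_exists_inv.mp hunit
      set r : T5 := -(a' * b) with hr
      have evf : Polynomial.eval r f = 0 := by
        rw [hrep]
        simp only [Polynomial.eval_add, Polynomial.eval_mul, Polynomial.eval_C, Polynomial.eval_X]
        rw [hr]; linear_combination (-b) * ha'
      have evp : Polynomial.eval r p = 0 := by
        rw [hfg, Polynomial.eval_mul, evf, zero_mul]
      have evp2 : r ^ 2 + c = 0 := by
        rw [hp] at evp
        simpa using evp
      exact notSquare (a' * b) (by rw [hr] at evp2; linear_combination evp2)
  exact (UniqueFactorizationMonoid.irreducible_iff_prime).mp irr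

abbrev dC : S6 := ∑ i : Fin 6, X i ^ 2

lemma prime_d6 : Prime (dC : S6) := by
  have himg : (finSuccEquiv ℂ 5) dC =
      Polynomial.X ^ 2 + Polynomial.C (∑ i : Fin 5, X i ^ 2) := by
    rw [show (dC : S6) = X 0 ^ 2 + ∑ i : Fin 5, X i.succ ^ 2 from Fin.sum_univ_succ _,
      map_add, map_pow, finSuccEquiv_X_zero, map_sum]
    congr 1
    rw [show (Polynomial.C (∑ i : Fin 5, (X i : T5) ^ 2))
        = ∑ i : Fin 5, Polynomial.C ((X i : T5) ^ 2) from map_sum _ _ _]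
    simp only [map_pow, finSuccEquiv_X_succ]
  have := prime_q5
  rw [← himg] at this
  exact (MulEquiv.prime_iff (finSuccEquiv ℂ 5).toRingEquiv.toMulEquiv).mp this

abbrev σc : S6 →+* S6 := MvPolynomial.map (starRingEnd ℂ)

lemma sigma_d : σc dC = dC := by
  rw [show (dC : S6) = ∑ i : Fin 6, X i ^ 2 from rfl, map_sum]
  simp only [map_pow, MvPolynomial.map_X]

lemma sigma_CI : σc (MvPolynomial.C Complex.I) = - MvPolynomial.C Complex.I := by
  rw [MvPolynomial.map_C]
  simp [Complex.conj_I]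

lemma hI2 : (MvPolynomial.C Complex.I : S6) ^ 2 = -1 := by
  rw [← map_pow, Complex.I_sq, map_neg, map_one]

lemma h2inv : (MvPolynomial.C ((2:ℂ)⁻¹) : S6) * 2 = 1 := by
  have h2 : (2 : S6) = MvPolynomial.C (2 : ℂ) := by
    rw [← map_ofNat (MvPolynomial.C : ℂ →+* S6) 2]
  rw [h2, ← map_mul]
  norm_num

lemma ts_aux : ∀ h : S6, ∀ x y : S6, σc x = x → σc y = y → dC * h ^ 2 = x ^ 2 + y ^ 2 → h = 0 := by
  intro h
  refine WellFounded.induction wellFounded_dvdNotUnit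
    (C := fun h : S6 => ∀ x y : S6, σc x = x → σc y = y → dC * h ^ 2 = x ^ 2 + y ^ 2 → h = 0)
    h ?_
  clear h
  intro h IH x y hx hy heq
  by_contra h0
  have hd0 : (dC : S6) ≠ 0 := prime_d6.1
  have hfac : x ^ 2 + y ^ 2 = (x + MvPolynomial.C Complex.I * y) * (x - MvPolynomial.C Complex.I * y) := by
    linear_combination (y^2) * hI2
  have hdvd : dC ∣ (x + MvPolynomial.C Complex.I * y) * (x - MvPolynomial.C Complex.I * y) :=
    ⟨h ^ 2, by rw [← hfac]; exact heq.symm⟩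
  have transfer : ∀ z w : S6, σc z = w → dC ∣ z → dC ∣ w := by
    rintro z w rfl ⟨s, hs⟩
    exact ⟨σc s, by rw [hs, map_mul, sigma_d]⟩
  have hswap1 : σc (x + MvPolynomial.C Complex.I * y) = x - MvPolynomial.C Complex.I * y := by
    rw [map_add, map_mul, hx, hy, sigma_CI]; ring
  have hswap2 : σc (x - MvPolynomial.C Complex.I * y) = x + MvPolynomial.C Complex.I * y := by
    rw [map_sub, map_mul, hx, hy, sigma_CI]; ring
  have hboth : dC ∣ (x + MvPolynomial.C Complex.I * y) ∧ dC ∣ (x - MvPolynomial.C Complex.I * y) := by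
    rcases prime_d6.2.2 _ _ hdvd with hc | hc
    exacts [⟨hc, transfer _ _ hswap1 hc⟩, ⟨transfer _ _ hswap2 hc, hc⟩]
  obtain ⟨s, hs⟩ := hboth.1
  obtain ⟨t, ht⟩ := hboth.2
  set x' : S6 := (s + t) * MvPolynomial.C ((2:ℂ)⁻¹) with hx'def
  set y' : S6 := (MvPolynomial.C ((2:ℂ)⁻¹) * (- MvPolynomial.C Complex.I)) * (s - t) with hy'def
  have hxd : x = dC * x' := by
    rw [hx'def]
    linear_combination (C ((2:ℂ)⁻¹ : ℂ) : S6) * hs + (C ((2:ℂ)⁻¹ : ℂ) : S6) * ht - x * h2inv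
  have hyd : y = dC * y' := by
    rw [hy'def]
    linear_combination (MvPolynomial.C ((2:ℂ)⁻¹) * (- MvPolynomial.C Complex.I) : S6) * hs
      - (MvPolynomial.C ((2:ℂ)⁻¹) * (- MvPolynomial.C Complex.I) : S6) * ht
      + y * (MvPolynomial.C Complex.I : S6) ^ 2 * h2inv + y * hI2
  have hx' : σc x' = x' := by
    have : dC * σc x' = dC * x' := by
      have := congrArg σc hxd
      rw [map_mul, sigma_d] at this
      rw [← this, ← hxd]; exact hx
    exact mul_left_cancel₀ hd0 this
  have hy' : σc y' = y' := by
    have : dC * σc y' = dC * y' := by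
      have := congrArg σc hyd
      rw [map_mul, sigma_d] at this
      rw [← this, ← hyd]; exact hy
    exact mul_left_cancel₀ hd0 this
  have hsq : h ^ 2 = dC * (x' ^ 2 + y' ^ 2) := by
    have : dC * h ^ 2 = dC * (dC * (x' ^ 2 + y' ^ 2)) := by
      rw [heq, hxd, hyd]; ring
    exact mul_left_cancel₀ hd0 this
  have hdh : dC ∣ h := prime_d6.dvd_of_dvd_pow (n := 2) ⟨x' ^ 2 + y' ^ 2, hsq⟩
  obtain ⟨h₁, hh₁⟩ := hdh
  have h₁0 : h₁ ≠ 0 := by rintro rfl; rw [mul_zero] at hh₁; exact h0 hh₁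
  have heq' : dC * h₁ ^ 2 = x' ^ 2 + y' ^ 2 := by
    have : dC * (dC * h₁ ^ 2) = dC * (x' ^ 2 + y' ^ 2) := by
      rw [← hsq, hh₁]; ring
    exact mul_left_cancel₀ hd0 this
  have hdnu : DvdNotUnit h₁ h := ⟨h₁0, dC, prime_d6.2.1, by rw [hh₁, mul_comm]⟩
  exact h₁0 (IH h₁ hdnu x' y' hx' hy' heq')

lemma two_squares (h A B : R6) (heq : (∑ i : Fin 6, X i ^ 2) * h ^ 2 = A ^ 2 + B ^ 2) :
    h = 0 := by
  set φ : R6 →+* S6 := MvPolynomial.map (algebraMap ℝ ℂ) with hφ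
  have hinj : Function.Injective φ :=
    MvPolynomial.map_injective _ fun a b hab => by exact_mod_cast hab
  have hcomm : ∀ p : R6, σc (φ p) = φ p := by
    intro p
    rw [hφ, MvPolynomial.map_map,
      show (starRingEnd ℂ).comp (algebraMap ℝ ℂ) = algebraMap ℝ ℂ from
        RingHom.ext fun r => Complex.conj_ofReal r]
  have himg : φ (∑ i : Fin 6, X i ^ 2) = dC := by
    rw [map_sum]
    simp only [hφ, map_pow, MvPolynomial.map_X]
  have heqC : dC * (φ h) ^ 2 = (φ A) ^ 2 + (φ B) ^ 2 := by
    have := congrArg φ heq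
    rw [map_mul, map_add, map_pow, map_pow, map_pow, himg] at this
    exact this
  have := ts_aux (φ h) (φ A) (φ B) (hcomm A) (hcomm B) heqC
  exact hinj (by rw [this, map_zero])

lemma not_sum2 (A B : K6) (heq : A ^ 2 + B ^ 2 = algebraMap R6 K6 (∑ i : Fin 6, X i ^ 2)) :
    False := by
  obtain ⟨pa, qa, hqa, rfl⟩ := IsFractionRing.div_surjective (A := R6) A
  obtain ⟨pb, qb, hqb, rfl⟩ := IsFractionRing.div_surjective (A := R6) B
  have hqa0 : qa ≠ 0 := nonZeroDivisors.ne_zero hqa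
  have hqb0 : qb ≠ 0 := nonZeroDivisors.ne_zero hqb
  set φ := algebraMap R6 K6
  have ha : φ qa ≠ 0 := fun h0 => hqa0 (inj6 (by simpa using h0 : φ qa = φ 0))
  have hb : φ qb ≠ 0 := fun h0 => hqb0 (inj6 (by simpa using h0 : φ qb = φ 0))
  have key : φ ((∑ i : Fin 6, X i ^ 2) * (qa * qb) ^ 2) = φ ((pa * qb) ^ 2 + (pb * qa) ^ 2) := by
    field_simp at heq
    simp only [map_add, map_mul, map_pow, map_sum] at heq ⊢
    linear_combination -heq
  have := two_squares (qa * qb) (pa * qb) (pb * qa) (inj6 key)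
  exact (mul_ne_zero hqa0 hqb0) this

lemma sum2sq_of_system (a1 a2 a3 b1 b2 b3 : K6)
    (h1 : a1 ^ 2 + a2 ^ 2 + a3 ^ 2 = 1) (h2 : a1 * b1 + a2 * b2 + a3 * b3 = 0) :
    ∃ A B : K6, A ^ 2 + B ^ 2 = b1 ^ 2 + b2 ^ 2 + b3 ^ 2 := by
  by_cases hs1 : a2 ^ 2 + a3 ^ 2 ≠ 0
  · have keyid : b1 ^ 2 + (a2 * b3 - a3 * b2) ^ 2
        = (b1 ^ 2 + b2 ^ 2 + b3 ^ 2) * (a2 ^ 2 + a3 ^ 2) := by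
      linear_combination (-(b1 ^ 2)) * h1 + (a1 * b1 - a2 * b2 - a3 * b3) * h2
    refine ⟨(b1 * a2 + (a2 * b3 - a3 * b2) * a3) / (a2 ^ 2 + a3 ^ 2),
      (b1 * a3 - (a2 * b3 - a3 * b2) * a2) / (a2 ^ 2 + a3 ^ 2), ?_⟩
    field_simp
    linear_combination (a2 ^ 2 + a3 ^ 2) * keyid
  by_cases hs2 : a1 ^ 2 + a3 ^ 2 ≠ 0
  · have keyid : b2 ^ 2 + (a3 * b1 - a1 * b3) ^ 2
        = (b1 ^ 2 + b2 ^ 2 + b3 ^ 2) * (a1 ^ 2 + a3 ^ 2) := by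
      linear_combination (-(b2 ^ 2)) * h1 + (a2 * b2 - a1 * b1 - a3 * b3) * h2
    refine ⟨(b2 * a1 + (a3 * b1 - a1 * b3) * a3) / (a1 ^ 2 + a3 ^ 2),
      (b2 * a3 - (a3 * b1 - a1 * b3) * a1) / (a1 ^ 2 + a3 ^ 2), ?_⟩
    field_simp
    linear_combination (a1 ^ 2 + a3 ^ 2) * keyid
  by_cases hs3 : a1 ^ 2 + a2 ^ 2 ≠ 0
  · have keyid : b3 ^ 2 + (a1 * b2 - a2 * b1) ^ 2
        = (b1 ^ 2 + b2 ^ 2 + b3 ^ 2) * (a1 ^ 2 + a2 ^ 2) := by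
      linear_combination (-(b3 ^ 2)) * h1 + (a3 * b3 - a1 * b1 - a2 * b2) * h2
    refine ⟨(b3 * a1 + (a1 * b2 - a2 * b1) * a2) / (a1 ^ 2 + a2 ^ 2),
      (b3 * a2 - (a1 * b2 - a2 * b1) * a1) / (a1 ^ 2 + a2 ^ 2), ?_⟩
    field_simp
    linear_combination (a1 ^ 2 + a2 ^ 2) * keyid
  exfalso
  push_neg at hs1 hs2 hs3
  obtain ⟨e2, e3⟩ := frK2 _ _ hs1
  obtain ⟨e1, -⟩ := frK2 _ _ hs2
  rw [e1, e2, e3] at h1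
  simp at h1

lemma sq_coeff (g : Polynomial K6) (M : ℕ) (hg : g.natDegree ≤ M) :
    (g ^ 2).coeff (2 * M) = (g.coeff M) ^ 2 := by
  rcases eq_or_lt_of_le hg with he | hlt
  · have := Polynomial.coeff_pow_mul_natDegree g 2
    rw [← he]
    rw [he] at this ⊢
    rw [this]
    rw [Polynomial.leadingCoeff, he]
  · have h1 : (g ^ 2).natDegree < 2 * M := by
      have := Polynomial.natDegree_pow g 2
      omega
    rw [Polynomial.coeff_eq_zero_of_natDegree_lt h1,
      Polynomial.coeff_eq_zero_of_natDegree_lt hlt]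
    ring

lemma keyPoly (H f1 f2 f3 : Polynomial K6) (hH : H ≠ 0)
    (heq : (Polynomial.X ^ 2 + Polynomial.C (algebraMap R6 K6 (∑ i : Fin 6, X i ^ 2))) * H ^ 2
      = f1 ^ 2 + f2 ^ 2 + f3 ^ 2) : False := by
  set D : K6 := algebraMap R6 K6 (∑ i : Fin 6, X i ^ 2) with hD
  obtain ⟨g1, g2, g3, hg⟩ := cassels _ H f1 f2 f3 hH heq
  have hpdeg : (Polynomial.X ^ 2 + Polynomial.C D).natDegree = 2 :=
    Polynomial.natDegree_X_pow_add_C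
  -- all g's have natDegree ≤ 1
  have hdegs : g1.natDegree ≤ 1 ∧ g2.natDegree ≤ 1 ∧ g3.natDegree ≤ 1 := by
    by_contra hcon
    set M : ℕ := max g1.natDegree (max g2.natDegree g3.natDegree) with hM
    have hM2 : 2 ≤ M := by
      have l1 : g1.natDegree ≤ M := le_max_left _ _
      have l2 : g2.natDegree ≤ M := le_trans (le_max_left _ _) (le_max_right _ _)
      have l3 : g3.natDegree ≤ M := le_trans (le_max_right _ _) (le_max_right _ _)
      by_contra hM1
      push_neg at hM1
      exact hcon ⟨by omega, by omega, by omega⟩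
    have l1 : g1.natDegree ≤ M := le_max_left _ _
    have l2 : g2.natDegree ≤ M := le_trans (le_max_left _ _) (le_max_right _ _)
    have l3 : g3.natDegree ≤ M := le_trans (le_max_right _ _) (le_max_right _ _)
    have hco := congrArg (fun q : Polynomial K6 => q.coeff (2 * M)) hg
    simp only [Polynomial.coeff_add] at hco
    rw [sq_coeff g1 M l1, sq_coeff g2 M l2, sq_coeff g3 M l3] at hco
    rw [Polynomial.coeff_X_pow, Polynomial.coeff_C, if_neg (by omega), if_neg (by omega)] at hco
    rw [add_zero] at hco
    obtain ⟨c1, c2, c3⟩ := frK3 _ _ _ hco.symm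
    have hattain : g1.natDegree = M ∨ g2.natDegree = M ∨ g3.natDegree = M := by
      rcases le_total g2.natDegree g3.natDegree with h23 | h23 <;>
        rcases le_total g1.natDegree (max g2.natDegree g3.natDegree) with h1m | h1m <;>
          simp only [hM] <;> omega
    have hclead : ∀ g : Polynomial K6, g.natDegree = M → g.coeff M = 0 → False := by
      intro g hgM hgc
      have hg0 : g ≠ 0 := by
        rintro rfl
        rw [Polynomial.natDegree_zero] at hgM
        omega
      have := Polynomial.leadingCoeff_ne_zero.2 hg0
      rw [Polynomial.leadingCoeff, hgM] at this
      exact this hgc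
    rcases hattain with h | h | h
    exacts [hclead g1 h c1, hclead g2 h c2, hclead g3 h c3]
  obtain ⟨hd1, hd2, hd3⟩ := hdegs
  have hrep1 := Polynomial.eq_X_add_C_of_natDegree_le_one hd1
  have hrep2 := Polynomial.eq_X_add_C_of_natDegree_le_one hd2
  have hrep3 := Polynomial.eq_X_add_C_of_natDegree_le_one hd3
  set A1 := g1.coeff 1; set B1 := g1.coeff 0
  set A2 := g2.coeff 1; set B2 := g2.coeff 0
  set A3 := g3.coeff 1; set B3 := g3.coeff 0
  have hg2 : Polynomial.X ^ 2 + Polynomial.C D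
      = Polynomial.C (A1 ^ 2 + A2 ^ 2 + A3 ^ 2) * Polynomial.X ^ 2
        + Polynomial.C ((A1 * B1 + A2 * B2 + A3 * B3) + (A1 * B1 + A2 * B2 + A3 * B3))
          * Polynomial.X
        + Polynomial.C (B1 ^ 2 + B2 ^ 2 + B3 ^ 2) := by
    rw [hg, hrep1, hrep2, hrep3]
    simp only [Polynomial.C_add, Polynomial.C_mul, Polynomial.C_pow]
    ring
  have hq2 := congrArg (fun q : Polynomial K6 => q.coeff 2) hg2
  have hq1 := congrArg (fun q : Polynomial K6 => q.coeff 1) hg2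
  have hq0 := congrArg (fun q : Polynomial K6 => q.coeff 0) hg2
  simp only [Polynomial.coeff_add, Polynomial.coeff_C_mul, Polynomial.coeff_X_pow,
    Polynomial.coeff_C, Polynomial.coeff_X] at hq2 hq1 hq0
  norm_num at hq2 hq1 hq0
  have hone : A1 ^ 2 + A2 ^ 2 + A3 ^ 2 = 1 := hq2.symm
  have hzero : A1 * B1 + A2 * B2 + A3 * B3 = 0 := add_self_eq_zero.1 hq1.symm
  obtain ⟨A, B, hAB⟩ := sum2sq_of_system A1 A2 A3 B1 B2 B3 hone hzero
  exact not_sum2 A B (by rw [hAB, ← hq0])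

lemma C7 (H w1 w2 w3 : MvPolynomial (Fin 7) ℝ)
    (heq : (∑ i : Fin 7, X i ^ 2) * H ^ 2 = w1 ^ 2 + w2 ^ 2 + w3 ^ 2) : H = 0 := by
  by_contra hH0
  set e := MvPolynomial.finSuccEquiv ℝ 6 with he
  have himg : e (∑ i : Fin 7, X i ^ 2)
      = Polynomial.X ^ 2 + Polynomial.C (∑ i : Fin 6, X i ^ 2) := by
    rw [show (∑ i : Fin 7, X i ^ 2 : MvPolynomial (Fin 7) ℝ)
        = X 0 ^ 2 + ∑ i : Fin 6, X i.succ ^ 2 from Fin.sum_univ_succ _,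
      map_add, map_pow, he, finSuccEquiv_X_zero, map_sum]
    congr 1
    rw [show (Polynomial.C (∑ i : Fin 6, (X i : R6) ^ 2))
        = ∑ i : Fin 6, Polynomial.C ((X i : R6) ^ 2) from map_sum _ _ _]
    simp only [map_pow, finSuccEquiv_X_succ]
  have heq2 := congrArg e heq
  simp only [map_mul, map_add, map_pow] at heq2
  rw [himg] at heq2
  -- now map into K6[X]
  set ψ : Polynomial R6 →+* Polynomial K6 := Polynomial.mapRingHom (algebraMap R6 K6) with hψ
  have heq3 := congrArg ψ heq2
  simp only [map_mul, map_add, map_pow, hψ, Polynomial.coe_mapRingHom, Polynomial.map_X,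
    Polynomial.map_C] at heq3
  have hne : (e H).map (algebraMap R6 K6) ≠ 0 := by
    rw [Ne, Polynomial.map_eq_zero_iff inj6]
    intro h0
    exact hH0 (e.injective (by rw [h0, map_zero]))
  exact keyPoly _ _ _ _ hne heq3

theorem stmt7 (a : Fin 4 → MvPolynomial (Fin 8) ℝ)
    (h : (∑ i : Fin 8, MvPolynomial.X i ^ 2 : MvPolynomial (Fin 8) ℝ) ∣ ∑ j, (a j) ^ 2) :
    ∀ j, (∑ i : Fin 8, MvPolynomial.X i ^ 2 : MvPolynomial (Fin 8) ℝ) ∣ a j := by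
  classical
  set e8 := MvPolynomial.finSuccEquiv ℝ 7 with he8
  set d7 : MvPolynomial (Fin 7) ℝ := ∑ i : Fin 7, X i ^ 2 with hd7
  set f : Polynomial (MvPolynomial (Fin 7) ℝ) := Polynomial.X ^ 2 + Polynomial.C d7 with hfdef
  have himg : e8 (∑ i : Fin 8, X i ^ 2) = f := by
    rw [show (∑ i : Fin 8, X i ^ 2 : MvPolynomial (Fin 8) ℝ)
        = X 0 ^ 2 + ∑ i : Fin 7, X i.succ ^ 2 from Fin.sum_univ_succ _,
      map_add, map_pow, he8, finSuccEquiv_X_zero, map_sum, hfdef, hd7]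
    congr 1
    rw [show (Polynomial.C (∑ i : Fin 7, (X i : MvPolynomial (Fin 7) ℝ) ^ 2))
        = ∑ i : Fin 7, Polynomial.C ((X i : MvPolynomial (Fin 7) ℝ) ^ 2) from map_sum _ _ _]
    simp only [map_pow, finSuccEquiv_X_succ]
  have hmon : f.Monic := by rw [hfdef]; exact Polynomial.monic_X_pow_add_C _ (by norm_num)
  have hf0 : f ≠ 0 := hmon.ne_zero
  have hfnd : f.natDegree = 2 := by rw [hfdef]; exact Polynomial.natDegree_X_pow_add_C
  have hfd : f.degree = 2 := by
    rw [hfdef]; exact Polynomial.degree_X_pow_add_C (by norm_num) _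
  rw [Fin.sum_univ_four] at h
  set A0 := e8 (a 0) with hA0
  set A1 := e8 (a 1) with hA1
  set A2 := e8 (a 2) with hA2
  set A3 := e8 (a 3) with hA3
  have hdvd : f ∣ A0 ^ 2 + A1 ^ 2 + A2 ^ 2 + A3 ^ 2 := by
    obtain ⟨c, hc⟩ := h
    refine ⟨e8 c, ?_⟩
    have := congrArg e8 hc
    simp only [map_mul, map_add, map_pow] at this
    rw [himg] at this
    exact this
  set r0 := A0 %ₘ f with hr0def
  set r1 := A1 %ₘ f with hr1def
  set r2 := A2 %ₘ f with hr2def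
  set r3 := A3 %ₘ f with hr3def
  set Q0 := A0 /ₘ f with hQ0def
  set Q1 := A1 /ₘ f with hQ1def
  set Q2 := A2 /ₘ f with hQ2def
  set Q3 := A3 /ₘ f with hQ3def
  have hrA0 : A0 = f * Q0 + r0 := by
    rw [hr0def, hQ0def]; linear_combination -(Polynomial.modByMonic_add_div A0 f)
  have hrA1 : A1 = f * Q1 + r1 := by
    rw [hr1def, hQ1def]; linear_combination -(Polynomial.modByMonic_add_div A1 f)
  have hrA2 : A2 = f * Q2 + r2 := by
    rw [hr2def, hQ2def]; linear_combination -(Polynomial.modByMonic_add_div A2 f)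
  have hrA3 : A3 = f * Q3 + r3 := by
    rw [hr3def, hQ3def]; linear_combination -(Polynomial.modByMonic_add_div A3 f)
  have hrd : ∀ r : Polynomial (MvPolynomial (Fin 7) ℝ), r %ₘ f = r → True := fun _ _ => trivial
  have hrdeg : ∀ rr : Polynomial (MvPolynomial (Fin 7) ℝ), rr.degree < f.degree →
      rr.natDegree ≤ 1 := by
    intro rr hlt
    rcases eq_or_ne rr 0 with h0 | h0
    · rw [h0]; simp
    · rw [hfd] at hlt
      have h2 : rr.natDegree < 2 := by
        have := (Polynomial.natDegree_lt_iff_degree_lt h0).2 (by exact_mod_cast hlt)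
        exact_mod_cast this
      omega
  have hrd0 : r0.natDegree ≤ 1 := hrdeg _ (hr0def ▸ Polynomial.degree_modByMonic_lt _ hmon)
  have hrd1 : r1.natDegree ≤ 1 := hrdeg _ (hr1def ▸ Polynomial.degree_modByMonic_lt _ hmon)
  have hrd2 : r2.natDegree ≤ 1 := hrdeg _ (hr2def ▸ Polynomial.degree_modByMonic_lt _ hmon)
  have hrd3 : r3.natDegree ≤ 1 := hrdeg _ (hr3def ▸ Polynomial.degree_modByMonic_lt _ hmon)
  set u0 := r0.coeff 0; set v0 := r0.coeff 1
  set u1 := r1.coeff 0; set v1 := r1.coeff 1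
  set u2 := r2.coeff 0; set v2 := r2.coeff 1
  set u3 := r3.coeff 0; set v3 := r3.coeff 1
  have hrep0 : r0 = Polynomial.C v0 * Polynomial.X + Polynomial.C u0 :=
    Polynomial.eq_X_add_C_of_natDegree_le_one hrd0
  have hrep1 : r1 = Polynomial.C v1 * Polynomial.X + Polynomial.C u1 :=
    Polynomial.eq_X_add_C_of_natDegree_le_one hrd1
  have hrep2 : r2 = Polynomial.C v2 * Polynomial.X + Polynomial.C u2 :=
    Polynomial.eq_X_add_C_of_natDegree_le_one hrd2
  have hrep3 : r3 = Polynomial.C v3 * Polynomial.X + Polynomial.C u3 :=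
    Polynomial.eq_X_add_C_of_natDegree_le_one hrd3
  have hfr : f ∣ r0 ^ 2 + r1 ^ 2 + r2 ^ 2 + r3 ^ 2 := by
    have key : r0 ^ 2 + r1 ^ 2 + r2 ^ 2 + r3 ^ 2
        = (A0 ^ 2 + A1 ^ 2 + A2 ^ 2 + A3 ^ 2)
          - f * (f * (Q0 ^ 2 + Q1 ^ 2 + Q2 ^ 2 + Q3 ^ 2)
            + 2 * (Q0 * r0 + Q1 * r1 + Q2 * r2 + Q3 * r3)) := by
      linear_combination (-(A0 + f * Q0 + r0)) * hrA0 + (-(A1 + f * Q1 + r1)) * hrA1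
        + (-(A2 + f * Q2 + r2)) * hrA2 + (-(A3 + f * Q3 + r3)) * hrA3
    rw [key]
    exact dvd_sub hdvd (Dvd.intro _ rfl)
  obtain ⟨E, hE⟩ := hfr
  have hEdeg : E.natDegree = 0 := by
    rcases eq_or_ne E 0 with h0 | h0
    · rw [h0]; simp
    · have bnd : ∀ rr : Polynomial (MvPolynomial (Fin 7) ℝ), rr.natDegree ≤ 1 →
          (rr ^ 2).natDegree ≤ 2 := by
        intro rr hrr; rw [Polynomial.natDegree_pow]; omega
      have hnd : (r0 ^ 2 + r1 ^ 2 + r2 ^ 2 + r3 ^ 2).natDegree ≤ 2 :=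
        le_trans (Polynomial.natDegree_add_le _ _)
          (max_le (le_trans (Polynomial.natDegree_add_le _ _)
            (max_le (le_trans (Polynomial.natDegree_add_le _ _)
              (max_le (bnd _ hrd0) (bnd _ hrd1))) (bnd _ hrd2))) (bnd _ hrd3))
      rw [hE, Polynomial.natDegree_mul hf0 h0] at hnd
      omega
  have hEC : E = Polynomial.C (E.coeff 0) := Polynomial.eq_C_of_natDegree_eq_zero hEdeg
  set k := E.coeff 0 with hk
  have hEexp : Polynomial.C (v0 ^ 2 + v1 ^ 2 + v2 ^ 2 + v3 ^ 2) * Polynomial.X ^ 2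
      + Polynomial.C ((u0 * v0 + u1 * v1 + u2 * v2 + u3 * v3)
          + (u0 * v0 + u1 * v1 + u2 * v2 + u3 * v3)) * Polynomial.X
      + Polynomial.C (u0 ^ 2 + u1 ^ 2 + u2 ^ 2 + u3 ^ 2)
      = Polynomial.C k * Polynomial.X ^ 2 + Polynomial.C (d7 * k) := by
    calc Polynomial.C (v0 ^ 2 + v1 ^ 2 + v2 ^ 2 + v3 ^ 2) * Polynomial.X ^ 2
          + Polynomial.C ((u0 * v0 + u1 * v1 + u2 * v2 + u3 * v3)
              + (u0 * v0 + u1 * v1 + u2 * v2 + u3 * v3)) * Polynomial.X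
          + Polynomial.C (u0 ^ 2 + u1 ^ 2 + u2 ^ 2 + u3 ^ 2)
        = r0 ^ 2 + r1 ^ 2 + r2 ^ 2 + r3 ^ 2 := by
          rw [hrep0, hrep1, hrep2, hrep3]
          simp only [Polynomial.C_add, Polynomial.C_mul, Polynomial.C_pow]
          ring
      _ = f * E := hE
      _ = Polynomial.C k * Polynomial.X ^ 2 + Polynomial.C (d7 * k) := by
          rw [hEC, hfdef]
          simp only [Polynomial.C_mul]
          ring
  have hq2 := congrArg (fun q : Polynomial (MvPolynomial (Fin 7) ℝ) => q.coeff 2) hEexp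
  have hq1 := congrArg (fun q : Polynomial (MvPolynomial (Fin 7) ℝ) => q.coeff 1) hEexp
  have hq0 := congrArg (fun q : Polynomial (MvPolynomial (Fin 7) ℝ) => q.coeff 0) hEexp
  simp only [Polynomial.coeff_add, Polynomial.coeff_C_mul, Polynomial.coeff_X_pow,
    Polynomial.coeff_C, Polynomial.coeff_X] at hq2 hq1 hq0
  norm_num at hq2 hq1 hq0
  -- hq2 : Σv² = k, hq1 : S + S = 0, hq0 : Σu² = d7 * k
  have hSuv : u0 * v0 + u1 * v1 + u2 * v2 + u3 * v3 = 0 := hq1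
  have hu' : u0 ^ 2 + u1 ^ 2 + u2 ^ 2 + u3 ^ 2
      = d7 * (v0 ^ 2 + v1 ^ 2 + v2 ^ 2 + v3 ^ 2) := by rw [hq2]; exact hq0
  have heuler : (∑ i : Fin 7, X i ^ 2) * (v0 ^ 2 + v1 ^ 2 + v2 ^ 2 + v3 ^ 2) ^ 2
      = (u0 * v1 - u1 * v0 + u2 * v3 - u3 * v2) ^ 2
        + (u0 * v2 - u1 * v3 - u2 * v0 + u3 * v1) ^ 2
        + (u0 * v3 + u1 * v2 - u2 * v1 - u3 * v0) ^ 2 := by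
    rw [← hd7]
    linear_combination (-(v0 ^ 2 + v1 ^ 2 + v2 ^ 2 + v3 ^ 2)) * hu'
      + (u0 * v0 + u1 * v1 + u2 * v2 + u3 * v3) * hSuv
  have hSv0 : v0 ^ 2 + v1 ^ 2 + v2 ^ 2 + v3 ^ 2 = 0 := C7 _ _ _ _ heuler
  have hvz : ∀ i : Fin 4, ![v0, v1, v2, v3] i = 0 := by
    apply fr_mv
    rw [Fin.sum_univ_four]
    simpa using hSv0
  have hv00 := hvz 0; have hv01 := hvz 1; have hv02 := hvz 2; have hv03 := hvz 3
  simp only [Matrix.cons_val_zero, Matrix.cons_val_one, Matrix.head_cons, Matrix.cons_val_two,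
    Matrix.tail_cons, Matrix.cons_val_three] at hv00 hv01 hv02 hv03
  have hSu0 : u0 ^ 2 + u1 ^ 2 + u2 ^ 2 + u3 ^ 2 = 0 := by
    rw [hu', hSv0, mul_zero]
  have huz : ∀ i : Fin 4, ![u0, u1, u2, u3] i = 0 := by
    apply fr_mv
    rw [Fin.sum_univ_four]
    simpa using hSu0
  have hu00 := huz 0; have hu01 := huz 1; have hu02 := huz 2; have hu03 := huz 3
  simp only [Matrix.cons_val_zero, Matrix.cons_val_one, Matrix.head_cons, Matrix.cons_val_two,
    Matrix.tail_cons, Matrix.cons_val_three] at hu00 hu01 hu02 hu03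
  have hr00 : r0 = 0 := by rw [hrep0, hv00, hu00]; simp
  have hr10 : r1 = 0 := by rw [hrep1, hv01, hu01]; simp
  have hr20 : r2 = 0 := by rw [hrep2, hv02, hu02]; simp
  have hr30 : r3 = 0 := by rw [hrep3, hv03, hu03]; simp
  have hback : ∀ j : Fin 4, f ∣ e8 (a j) →
      (∑ i : Fin 8, MvPolynomial.X i ^ 2 : MvPolynomial (Fin 8) ℝ) ∣ a j := by
    intro j ⟨c, hc⟩
    refine ⟨e8.symm c, e8.injective ?_⟩
    rw [hc, map_mul, himg, AlgEquiv.apply_symm_apply]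
  intro j
  fin_cases j
  · exact hback 0 ⟨Q0, by rw [← hA0, hrA0, hr00, add_zero]⟩
  · exact hback 1 ⟨Q1, by rw [← hA1, hrA1, hr10, add_zero]⟩
  · exact hback 2 ⟨Q2, by rw [← hA2, hrA2, hr20, add_zero]⟩
  · exact hback 3 ⟨Q3, by rw [← hA3, hrA3, hr30, add_zero]⟩
end
end

section
/- If P and Q are real polynomials in 6 variables x₁,...,x₆ such that P² + Q² is divisible by x₁²+...+x₆², then both P and Q are divisible by x₁²+...+x₆². -/
open Polynomial in

lemma quad_irred {A : Type*} [CommRing A] [IsDomain A] (c : A)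
    (hc : ∀ a : A, a ^ 2 ≠ -c) :
    Irreducible ((X : A[X]) ^ 2 + C c) := by
  have hmon : ((X : A[X]) ^ 2 + C c).Monic := monic_X_pow_add_C c (by norm_num)
  have hdeg : ((X : A[X]) ^ 2 + C c).natDegree = 2 := natDegree_X_pow_add_C
  constructor
  · intro hu
    have := natDegree_eq_zero_of_isUnit hu
    omega
  · intro g h feq
    by_contra hgh
    push_neg at hgh
    obtain ⟨hg, hh⟩ := hgh
    have hg0 : g ≠ 0 := by rintro rfl; simp at feq; exact hmon.ne_zero feq
    have hh0 : h ≠ 0 := by rintro rfl; simp at feq; exact hmon.ne_zero feq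
    have hsum : g.natDegree + h.natDegree = 2 := by
      rw [← natDegree_mul hg0 hh0, ← feq, hdeg]
    have hlc : g.leadingCoeff * h.leadingCoeff = 1 := by
      have := hmon
      rw [feq, Monic, leadingCoeff_mul] at this
      exact this
    have hgne : g.natDegree ≠ 0 := by
      intro h0
      apply hg
      rw [eq_C_of_natDegree_eq_zero h0]
      apply isUnit_C.mpr
      have : g.coeff 0 = g.leadingCoeff := by rw [leadingCoeff, h0]
      rw [this]
      exact IsUnit.of_mul_eq_one _ hlc
    have hhne : h.natDegree ≠ 0 := by
      intro h0
      apply hh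
      rw [eq_C_of_natDegree_eq_zero h0]
      apply isUnit_C.mpr
      have : h.coeff 0 = h.leadingCoeff := by rw [leadingCoeff, h0]
      rw [this]
      exact IsUnit.of_mul_eq_one _ (by rw [mul_comm] at hlc; exact hlc)
    have hg1 : g.natDegree = 1 := by omega
    have hh1 : h.natDegree = 1 := by omega
    have hgform : g = C (g.coeff 1) * X + C (g.coeff 0) :=
      eq_X_add_C_of_degree_le_one (by rw [degree_eq_natDegree hg0, hg1]; exact le_refl _)
    have hhform : h = C (h.coeff 1) * X + C (h.coeff 0) :=
      eq_X_add_C_of_degree_le_one (by rw [degree_eq_natDegree hh0, hh1]; exact le_refl _)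
    rw [hgform, hhform] at feq
    set a1 := g.coeff 1; set a0 := g.coeff 0; set b1 := h.coeff 1; set b0 := h.coeff 0
    have feq2 : (X : A[X]) ^ 2 + C c =
        C (a1 * b1) * X ^ 2 + C (a1 * b0 + a0 * b1) * X + C (a0 * b0) := by
      rw [feq]; simp only [map_mul, map_add]; ring
    have e2 : (1 : A) = a1 * b1 := by
      have := congrArg (fun p => Polynomial.coeff p 2) feq2
      simpa [mul_assoc, coeff_C_mul, coeff_X_pow] using this
    have e1 : (0 : A) = a1 * b0 + a0 * b1 := by
      have := congrArg (fun p => Polynomial.coeff p 1) feq2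
      simpa [mul_assoc, coeff_C_mul, coeff_X_pow] using this
    have e0 : c = a0 * b0 := by
      have := congrArg (fun p => Polynomial.coeff p 0) feq2
      simpa [mul_assoc, coeff_C_mul, coeff_X_pow] using this
    exact hc (a0 * b1) (by linear_combination (-(a0*b1))*e1 + (a0*b0)*e2 + e0)

open Polynomial in

lemma not_sq (a : MvPolynomial (Fin 5) ℂ) :
    a ^ 2 ≠ -(∑ i : Fin 5, MvPolynomial.X i ^ 2) := by
  intro ha
  set ψ : MvPolynomial (Fin 5) ℂ →ₐ[ℂ] Polynomial ℂ :=
    MvPolynomial.aeval ![Polynomial.X, Polynomial.X ^ 2, 0, 0, 0] with hψ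
  have h2 : (ψ a) ^ 2 = -((X : ℂ[X]) ^ 2 + X ^ 4) := by
    have := congrArg ψ ha
    rw [map_pow] at this
    rw [this, map_neg, map_sum]
    congr 1
    rw [Fin.sum_univ_five]
    simp [hψ]
    ring
  have hroot : Polynomial.eval Complex.I (ψ a) = 0 := by
    have : (Polynomial.eval Complex.I (ψ a)) ^ 2 = 0 := by
      rw [← eval_pow, h2]
      simp [Complex.I_sq]
    exact pow_eq_zero_iff (by norm_num) |>.mp this
  have hder := congrArg derivative h2
  rw [derivative_pow] at hder
  have := congrArg (Polynomial.eval Complex.I) hder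
  simp [hroot, Complex.I_sq] at this
  have hI3 : Complex.I ^ 3 = -Complex.I := by
    rw [pow_succ, Complex.I_sq]; ring
  have h2I : (2 : ℂ) * Complex.I ≠ 0 := by simp [Complex.I_ne_zero]
  apply h2I
  linear_combination -this

open MvPolynomial in

lemma descend (S P : MvPolynomial (Fin 6) ℝ) (hS : S ≠ 0)
    (hd : MvPolynomial.map (algebraMap ℝ ℂ) S ∣ MvPolynomial.map (algebraMap ℝ ℂ) P) :
    S ∣ P := by
  obtain ⟨D, hD⟩ := hd
  set φ := MvPolynomial.map (algebraMap ℝ ℂ) with hφ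
  set σ := MvPolynomial.map (starRingEnd ℂ : ℂ →+* ℂ) with hσ
  have hcomp : ∀ p : MvPolynomial (Fin 6) ℝ, σ (φ p) = φ p := by
    intro p
    rw [hσ, hφ, MvPolynomial.map_map]
    have : (starRingEnd ℂ).comp (algebraMap ℝ ℂ) = algebraMap ℝ ℂ :=
      RingHom.ext fun r => Complex.conj_ofReal r
    rw [this]
  have hφinj : Function.Injective φ :=
    MvPolynomial.map_injective _ (algebraMap ℝ ℂ).injective
  have hφS : φ S ≠ 0 := fun h0 => hS (hφinj (by rwa [map_zero]))
  have hD2 : φ P = φ S * σ D := by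
    conv_lhs => rw [← hcomp P, hD, map_mul, hcomp S]
  have hfix : σ D = D := mul_left_cancel₀ hφS (hD2.symm.trans hD)
  have hreal : ∀ m, ((starRingEnd ℂ) (D.coeff m)) = D.coeff m := by
    intro m
    have := congrArg (fun p => MvPolynomial.coeff m p) hfix
    simpa [hσ, MvPolynomial.coeff_map] using this
  set A : MvPolynomial (Fin 6) ℝ :=
    ∑ m ∈ D.support, monomial m ((D.coeff m).re) with hA
  have hφA : φ A = D := by
    apply MvPolynomial.ext
    intro m
    rw [hφ, MvPolynomial.coeff_map]
    have hAc : MvPolynomial.coeff m A = if m ∈ D.support then (D.coeff m).re else 0 := by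
      rw [hA, MvPolynomial.coeff_sum]
      simp only [MvPolynomial.coeff_monomial]
      exact Finset.sum_ite_eq' D.support m fun m => (D.coeff m).re
    rw [hAc]
    by_cases hm : m ∈ D.support
    · simp only [hm, if_true]
      exact Complex.conj_eq_iff_re.mp (hreal m)
    · simp only [hm, if_false, map_zero]
      exact (MvPolynomial.notMem_support_iff.mp hm).symm
  refine ⟨A, hφinj ?_⟩
  rw [map_mul, hφA, hD]

open MvPolynomial in

lemma Sc_prime : Prime (∑ i : Fin 6, X i ^ 2 : MvPolynomial (Fin 6) ℂ) := by
  have himg : (finSuccEquiv ℂ 5) (∑ i : Fin 6, X i ^ 2 : MvPolynomial (Fin 6) ℂ)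
      = Polynomial.X ^ 2 + Polynomial.C (∑ i : Fin 5, X i ^ 2) := by
    rw [Fin.sum_univ_succ, map_add, map_pow, finSuccEquiv_X_zero, map_sum]
    congr 1
    rw [map_sum]
    congr 1
    funext i
    rw [map_pow, finSuccEquiv_X_succ, ← map_pow]
  have hirr : Irreducible (∑ i : Fin 6, X i ^ 2 : MvPolynomial (Fin 6) ℂ) := by
    rw [← MulEquiv.irreducible_iff (finSuccEquiv ℂ 5)]
    rw [himg]
    exact quad_irred _ (fun a ha => not_sq a ha)
  exact hirr.prime

open MvPolynomial in

theorem stmt8 (P Q : MvPolynomial (Fin 6) ℝ)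
    (h : (∑ i : Fin 6, MvPolynomial.X i ^ 2 : MvPolynomial (Fin 6) ℝ) ∣ P ^ 2 + Q ^ 2) :
    (∑ i : Fin 6, MvPolynomial.X i ^ 2 : MvPolynomial (Fin 6) ℝ) ∣ P ∧
    (∑ i : Fin 6, MvPolynomial.X i ^ 2 : MvPolynomial (Fin 6) ℝ) ∣ Q := by
  set S : MvPolynomial (Fin 6) ℝ := ∑ i : Fin 6, X i ^ 2 with hSdef
  set φ := MvPolynomial.map (algebraMap ℝ ℂ) (σ := Fin 6) with hφ
  set σc := MvPolynomial.map (starRingEnd ℂ : ℂ →+* ℂ) (σ := Fin 6) with hσc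
  have hcomp : ∀ p : MvPolynomial (Fin 6) ℝ, σc (φ p) = φ p := by
    intro p
    rw [hσc, hφ, MvPolynomial.map_map]
    have : (starRingEnd ℂ).comp (algebraMap ℝ ℂ) = algebraMap ℝ ℂ :=
      RingHom.ext fun r => Complex.conj_ofReal r
    rw [this]
  have hφS : φ S = (∑ i : Fin 6, X i ^ 2 : MvPolynomial (Fin 6) ℂ) := by
    rw [hSdef, map_sum]
    congr 1
    funext i
    rw [map_pow, MvPolynomial.map_X]
  have hprime : Prime (φ S) := hφS ▸ Sc_prime
  have hSne : S ≠ 0 := by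
    intro h0
    have := hprime.ne_zero
    rw [h0, map_zero] at this
    exact this rfl
  set i' : MvPolynomial (Fin 6) ℂ := MvPolynomial.C Complex.I with hi'
  have hii : i' * i' = -1 := by
    rw [hi', ← MvPolynomial.C_mul, Complex.I_mul_I, map_neg, map_one]
  set u := φ P + i' * φ Q with hu
  set v := φ P - i' * φ Q with hv
  have huv : u * v = φ P ^ 2 + φ Q ^ 2 := by
    rw [hu, hv]
    linear_combination (-(φ Q ^ 2)) * hii
  have hσu : σc u = v := by
    rw [hu, map_add, map_mul, hcomp, hcomp, hσc, hi', MvPolynomial.map_C]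
    simp [Complex.conj_I, hv, hσc, hi']
    ring
  have hσv : σc v = u := by
    rw [hv, map_sub, map_mul, hcomp, hcomp, hσc, hi', MvPolynomial.map_C]
    simp [Complex.conj_I, hu, hσc, hi']
  have hσS : σc (φ S) = φ S := hcomp S
  have hdvd : φ S ∣ u * v := by
    rw [huv, ← map_pow, ← map_pow, ← map_add]
    exact map_dvd φ h
  have hboth : φ S ∣ u ∧ φ S ∣ v := by
    rcases hprime.2.2 u v hdvd with hc1 | hc2
    · refine ⟨hc1, ?_⟩
      have := map_dvd σc hc1
      rwa [hσS, hσu] at this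
    · refine ⟨?_, hc2⟩
      have := map_dvd σc hc2
      rwa [hσS, hσv] at this
  have h2unit : IsUnit (2 : MvPolynomial (Fin 6) ℂ) := by
    rw [show (2 : MvPolynomial (Fin 6) ℂ) = MvPolynomial.C 2 by rw [map_ofNat]]
    exact (isUnit_iff_ne_zero.mpr two_ne_zero).map (MvPolynomial.C : ℂ →+* MvPolynomial (Fin 6) ℂ)
  have hiunit : IsUnit i' := (isUnit_iff_ne_zero.mpr Complex.I_ne_zero).map (MvPolynomial.C : ℂ →+* MvPolynomial (Fin 6) ℂ)
  have hdP : φ S ∣ φ P := by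
    have hsum : φ S ∣ u + v := dvd_add hboth.1 hboth.2
    have : u + v = 2 * φ P := by rw [hu, hv]; ring
    rw [this, h2unit.dvd_mul_left] at hsum
    exact hsum
  have hdQ : φ S ∣ φ Q := by
    have hsub : φ S ∣ u - v := dvd_sub hboth.1 hboth.2
    have : u - v = 2 * (i' * φ Q) := by rw [hu, hv]; ring
    rw [this, h2unit.dvd_mul_left, hiunit.dvd_mul_left] at hsub
    exact hsub
  exact ⟨descend S P hSne hdP, descend S Q hSne hdQ⟩
end

section
/- Let A be an 8×m matrix with entries in R[x₁,...,x₈], m ≤ 4, and D a real diagonal m×m matrix with positive diagonal entries. If every entry of A·D·Aᵗ is divisible by ‖X‖² = x₁²+...+x₈², then every entry of A is divisible by ‖X‖². -/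
set_option maxHeartbeats 1000000
set_option synthInstance.maxHeartbeats 400000

noncomputable section Stmt9Aux
open Polynomial

abbrev Rn (n : ℕ) := MvPolynomial (Fin n) ℝ
abbrev Kn (n : ℕ) := FractionRing (Rn n)

def qn (n : ℕ) : Rn n := ∑ i, MvPolynomial.X i ^ 2

lemma sumsq_eq_zero {n m : ℕ} (f : Fin m → Rn n) (h : ∑ s, f s ^ 2 = 0) :
    ∀ s, f s = 0 := by
  intro s
  apply MvPolynomial.funext
  intro x
  have hx : ∑ t, (MvPolynomial.eval x (f t)) ^ 2 = 0 := by
    have := congrArg (MvPolynomial.eval x) h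
    simpa using this
  have h0 : ∀ t ∈ Finset.univ, (MvPolynomial.eval x (f t)) ^ 2 = 0 := by
    have := (Finset.sum_eq_zero_iff_of_nonneg (fun t _ => sq_nonneg _)).mp hx
    exact this
  have := h0 s (Finset.mem_univ s)
  simpa [pow_eq_zero_iff] using this

lemma qn_ne_zero {n : ℕ} (hn : 0 < n) : qn n ≠ 0 := by
  intro h
  have := sumsq_eq_zero (n := n) (m := n) (fun i => MvPolynomial.X i) (by simpa [qn] using h)
  exact MvPolynomial.X_ne_zero (⟨0, hn⟩ : Fin n) (this _)

lemma Kn_sumsq {n m : ℕ} (f : Fin m → Kn n) (h : ∑ s, f s ^ 2 = 0) :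
    ∀ s, f s = 0 := by
  obtain ⟨b, hb⟩ := IsLocalization.exist_integer_multiples (nonZeroDivisors (Rn n))
    Finset.univ f
  choose g hg using fun s => hb s (Finset.mem_univ s)
  have hb0 : algebraMap (Rn n) (Kn n) b ≠ 0 := by
    have : (b : Rn n) ≠ 0 := nonZeroDivisors.coe_ne_zero b
    simpa using fun hc => this (IsFractionRing.injective (Rn n) (Kn n) (by simpa using hc))
  have hsum : ∑ s, (algebraMap (Rn n) (Kn n) (g s)) ^ 2 = 0 := by
    have : ∑ s, ((b : Rn n) • f s) ^ 2 = (algebraMap (Rn n) (Kn n) b)^2 * ∑ s, f s ^2 := by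
      rw [Finset.mul_sum]
      refine Finset.sum_congr rfl fun s _ => ?_
      rw [Algebra.smul_def]; ring
    rw [h, mul_zero] at this
    calc ∑ s, (algebraMap (Rn n) (Kn n) (g s)) ^ 2 = ∑ s, ((b : Rn n) • f s) ^ 2 := by
          refine Finset.sum_congr rfl fun s _ => by rw [hg s]
      _ = 0 := this
  have : (algebraMap (Rn n) (Kn n)) (∑ s, g s ^ 2) = 0 := by
    push_cast [map_sum, map_pow] at hsum ⊢
    simpa using hsum
  have hg0 : ∑ s, g s ^ 2 = 0 := by
    apply IsFractionRing.injective (Rn n) (Kn n)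
    simpa using this
  intro s
  have := sumsq_eq_zero g hg0 s
  have h2 : (b : Rn n) • f s = 0 := by rw [← hg s, this]; simp
  rw [Algebra.smul_def] at h2
  rcases mul_eq_zero.mp h2 with h3 | h3
  · exact absurd h3 hb0
  · exact h3


section CoeffSq
variable {F : Type*} [CommRing F] [IsDomain F]

lemma coeff_sq_top (f : F[X]) {D : ℕ} (hf : f.natDegree ≤ D) :
    (f ^ 2).coeff (2 * D) = (f.coeff D) ^ 2 := by
  rcases eq_or_ne f 0 with rfl | h0
  · simp
  rcases eq_or_lt_of_le hf with heq | hlt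
  · have hnd : (f ^ 2).natDegree = 2 * D := by rw [natDegree_pow, heq]
    rw [← hnd, coeff_natDegree, leadingCoeff_pow]
    rw [← heq, coeff_natDegree]
  · have h1 : (f ^ 2).natDegree < 2 * D := by rw [natDegree_pow]; omega
    rw [coeff_eq_zero_of_natDegree_lt h1, coeff_eq_zero_of_natDegree_lt hlt]
    ring

end CoeffSq

section Cassels
variable {F : Type} [Field F]
variable (hreal : ∀ (k : ℕ) (f : Fin k → F), ∑ s, f s ^ 2 = 0 → ∀ s, f s = 0)

include hreal

lemma poly_sumsq {k : ℕ} (f : Fin k → F[X]) (h : ∑ s, f s ^ 2 = 0) :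
    ∀ s, f s = 0 := by
  set D := Finset.univ.sup (fun s => (f s).natDegree) with hD
  have hcoeff : ∀ s, (f s).coeff D = 0 := by
    apply hreal
    have := congrArg (fun p => Polynomial.coeff p (2 * D)) h
    simp only [finset_sum_coeff, coeff_zero] at this
    rw [← this]
    exact Finset.sum_congr rfl fun s _ =>
      (coeff_sq_top (f s) (Finset.le_sup (f := fun s => (f s).natDegree) (Finset.mem_univ s))).symm
  intro s
  by_contra hs
  rcases Nat.eq_zero_or_pos D with hD0 | hDpos
  · apply hs
    have hle : (f s).natDegree ≤ 0 := hD0 ▸ Finset.le_sup (f := fun s => (f s).natDegree) (Finset.mem_univ s)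
    rw [eq_C_of_natDegree_le_zero hle]
    have := hcoeff s
    rw [hD0] at this
    rw [this, map_zero]
  · obtain ⟨s₁, -, hs₁⟩ := Finset.exists_mem_eq_sup Finset.univ
      ⟨s, Finset.mem_univ s⟩ (fun s => (f s).natDegree)
    have hQs₁ : f s₁ ≠ 0 := by
      intro h0
      rw [h0] at hs₁
      simp only [natDegree_zero] at hs₁
      omega
    have := hcoeff s₁
    rw [hD, hs₁, coeff_natDegree] at this
    exact leadingCoeff_ne_zero.mpr hQs₁ this

lemma cassels_s9 {k : ℕ} (q : F[X]) :
    ∀ (N : ℕ) (P : Fin k → F[X]) (W : F[X]), W ≠ 0 → W.natDegree ≤ N →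
      (∑ s, P s ^ 2 = q * W ^ 2) → ∃ Q : Fin k → F[X], ∑ s, Q s ^ 2 = q := by
  intro N
  induction N using Nat.strong_induction_on with
  | _ N ih =>
  intro P W hW hdeg hsum
  by_cases hall : ∀ s, W ∣ P s
  · choose Q hQ using hall
    refine ⟨Q, ?_⟩
    have h1 : W ^ 2 * ∑ s, Q s ^ 2 = W ^ 2 * q := by
      rw [Finset.mul_sum]
      calc ∑ s, W ^ 2 * Q s ^ 2 = ∑ s, P s ^ 2 := by
            refine Finset.sum_congr rfl fun s _ => ?_
            rw [hQ s]; ring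
        _ = W ^ 2 * q := by rw [hsum]; ring
    exact mul_left_cancel₀ (pow_ne_zero 2 hW) h1
  · push_neg at hall
    obtain ⟨s₀, hs₀⟩ := hall
    have hW1 : 1 ≤ W.natDegree := by
      by_contra hc
      push_neg at hc
      have hdeg0 : W.degree = 0 := by
        rw [degree_eq_natDegree hW]
        exact_mod_cast by omega
      exact hs₀ ((isUnit_iff_degree_eq_zero.mpr hdeg0).dvd)
    set W' := W * C (W.leadingCoeff)⁻¹ with hW'def
    have hW'm : W'.Monic := monic_mul_leadingCoeff_inv hW
    set R : Fin k → F[X] := fun s => P s %ₘ W' with hRdef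
    set Cc : Fin k → F[X] := fun s => C (W.leadingCoeff)⁻¹ * (P s /ₘ W') with hCcdef
    have hRs : ∀ s, R s = P s - W * Cc s := by
      intro s
      have h1 := modByMonic_add_div (P s) W'
      simp only [hRdef, hCcdef]
      linear_combination h1 - (P s /ₘ W') * hW'def
    have hRdeg : ∀ s, (R s).degree < W.degree := by
      intro s
      have := degree_modByMonic_lt (P s) hW'm
      rwa [degree_mul_leadingCoeff_inv _ hW] at this
    have hRne : ¬ ∀ s, R s = 0 := by
      intro hR0
      apply hs₀
      have h1 : W' ∣ P s₀ := (modByMonic_eq_zero_iff_dvd hW'm).mp (hR0 s₀)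
      have h2 : W ∣ W' := Dvd.intro _ rfl
      exact h2.trans h1
    set S1 := ∑ s, P s ^ 2 with hS1
    set Sm := ∑ s, P s * Cc s with hSm
    set T := ∑ s, Cc s ^ 2 with hT
    set α := T - q with hα
    set β := -(2 * (Sm - q * W)) with hβ
    set Wn := α * W + β with hWndef
    set Pn : Fin k → F[X] := fun s => α * P s + β * Cc s with hPndef
    have expand1 : ∑ s, R s ^ 2 = S1 - 2 * W * Sm + W ^ 2 * T := by
      have h1 : ∀ s ∈ Finset.univ, R s ^ 2
          = P s ^ 2 - 2 * W * (P s * Cc s) + W ^ 2 * Cc s ^ 2 :=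
        fun s _ => by rw [hRs s]; ring
      rw [Finset.sum_congr rfl h1, Finset.sum_add_distrib, Finset.sum_sub_distrib,
        ← Finset.mul_sum, ← Finset.mul_sum, ← hS1, ← hSm, ← hT]
    have key1 : W * Wn = ∑ s, R s ^ 2 := by
      rw [expand1, hWndef, hα, hβ]
      linear_combination -hsum
    have key2 : ∑ s, Pn s ^ 2 = q * Wn ^ 2 := by
      have expand2 : ∑ s, Pn s ^ 2 = α ^ 2 * S1 + 2 * α * β * Sm + β ^ 2 * T := by
        have h1 : ∀ s ∈ Finset.univ, Pn s ^ 2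
            = α ^ 2 * P s ^ 2 + 2 * α * β * (P s * Cc s) + β ^ 2 * Cc s ^ 2 :=
          fun s _ => by rw [hPndef]; simp only; ring
        rw [Finset.sum_congr rfl h1, Finset.sum_add_distrib, Finset.sum_add_distrib,
          ← Finset.mul_sum, ← Finset.mul_sum, ← Finset.mul_sum, ← hS1, ← hSm, ← hT]
      rw [expand2, hWndef, hα, hβ]
      linear_combination ((T - q) ^ 2) * hsum
    have hRsumne : ∑ s, R s ^ 2 ≠ 0 := fun h0 => hRne (poly_sumsq hreal R h0)
    have hWnne : Wn ≠ 0 := by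
      intro h0
      rw [h0, mul_zero] at key1
      exact hRsumne key1.symm
    have hdegsum : (∑ s, R s ^ 2).natDegree ≤ 2 * W.natDegree - 2 := by
      apply natDegree_sum_le_of_forall_le
      intro s _
      rcases eq_or_ne (R s) 0 with h0 | h0
      · simp [h0]
      · have h1 : (R s).natDegree < W.natDegree := natDegree_lt_natDegree h0 (hRdeg s)
        rw [natDegree_pow]
        omega
    have hWndeg : Wn.natDegree < W.natDegree := by
      have h1 : W.natDegree + Wn.natDegree = (∑ s, R s ^ 2).natDegree := by
        rw [← key1, natDegree_mul hW hWnne]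
      omega
    exact ih Wn.natDegree (by omega) Pn Wn hWnne le_rfl key2

lemma deg_le_one {k : ℕ} (c : F) (Q : Fin k → F[X])
    (hQ : ∑ s, Q s ^ 2 = X ^ 2 + C c) : ∀ s, (Q s).natDegree ≤ 1 := by
  by_contra hcon
  push_neg at hcon
  obtain ⟨s₀, hs₀⟩ := hcon
  set D := Finset.univ.sup (fun s => (Q s).natDegree) with hD
  have hD2 : 2 ≤ D := le_trans hs₀ (Finset.le_sup (f := fun s => (Q s).natDegree) (Finset.mem_univ s₀))
  have hcoeff : ∀ s, (Q s).coeff D = 0 := by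
    apply hreal
    have := congrArg (fun p => Polynomial.coeff p (2 * D)) hQ
    simp only [finset_sum_coeff] at this
    have hrhs : (X ^ 2 + C c : F[X]).coeff (2 * D) = 0 := by
      rw [coeff_add, coeff_X_pow, coeff_C]
      have : ¬ (2 * D = 2) := by omega
      have h2 : ¬ (2 * D = 0) := by omega
      simp [this, h2]
    rw [hrhs] at this
    rw [← this]
    exact Finset.sum_congr rfl fun s _ =>
      (coeff_sq_top (Q s) (Finset.le_sup (f := fun s => (Q s).natDegree) (Finset.mem_univ s))).symm
  obtain ⟨s₁, -, hs₁⟩ := Finset.exists_mem_eq_sup Finset.univ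
    ⟨s₀, Finset.mem_univ s₀⟩ (fun s => (Q s).natDegree)
  have hQs₁ : Q s₁ ≠ 0 := by
    intro h0
    rw [h0] at hs₁
    simp only [natDegree_zero] at hs₁
    omega
  have := hcoeff s₁
  rw [hD, hs₁, coeff_natDegree] at this
  exact leadingCoeff_ne_zero.mpr hQs₁ this

lemma reflect {k : ℕ} (c : F) (a b : Fin (k + 1) → F)
    (ha : ∑ s, a s ^ 2 = 1) (hab : ∑ s, a s * b s = 0) (hb : ∑ s, b s ^ 2 = c) :
    ∃ e : Fin k → F, ∑ s, e s ^ 2 = c := by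
  rw [Fin.sum_univ_succ] at ha hab hb
  by_cases h1 : a 0 = 1
  · have htail : ∑ s : Fin k, a s.succ ^ 2 = 0 := by
      rw [h1] at ha
      linear_combination ha
    have haz := hreal _ _ htail
    have hsz : ∑ s : Fin k, a s.succ * b s.succ = 0 :=
      Finset.sum_eq_zero fun s _ => by rw [haz s]; ring
    have hb0 : b 0 = 0 := by
      rw [h1, hsz, one_mul, add_zero] at hab
      exact hab
    exact ⟨fun s => b s.succ, by rw [hb0] at hb; linear_combination hb⟩
  · have hne : 1 - a 0 ≠ 0 := sub_ne_zero.mpr (Ne.symm h1)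
    set lam := b 0 / (1 - a 0) with hlam
    refine ⟨fun s => b s.succ + lam * a s.succ, ?_⟩
    have expand : ∑ s : Fin k, (b s.succ + lam * a s.succ) ^ 2
        = ∑ s : Fin k, b s.succ ^ 2 + 2 * lam * (∑ s : Fin k, a s.succ * b s.succ)
          + lam ^ 2 * (∑ s : Fin k, a s.succ ^ 2) := by
      rw [Finset.mul_sum, Finset.mul_sum, ← Finset.sum_add_distrib,
        ← Finset.sum_add_distrib]
      exact Finset.sum_congr rfl fun s _ => by ring
    rw [expand]
    have e1 : ∑ s : Fin k, a s.succ ^ 2 = 1 - a 0 ^ 2 := by linear_combination ha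
    have e2 : ∑ s : Fin k, a s.succ * b s.succ = -(a 0 * b 0) := by linear_combination hab
    have e3 : ∑ s : Fin k, b s.succ ^ 2 = c - b 0 ^ 2 := by linear_combination hb
    rw [e1, e2, e3, hlam]
    field_simp
    ring

end Cassels

lemma finSuccEquiv_qn (n : ℕ) :
    (MvPolynomial.finSuccEquiv ℝ n) (qn (n + 1)) = X ^ 2 + Polynomial.C (qn n) := by
  have h1 : qn (n + 1) = MvPolynomial.X 0 ^ 2 + ∑ i : Fin n, MvPolynomial.X i.succ ^ 2 := by
    rw [qn, Fin.sum_univ_succ]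
  rw [h1, map_add, map_pow, MvPolynomial.finSuccEquiv_X_zero, map_sum]
  congr 1
  rw [qn, map_sum]
  exact Finset.sum_congr rfl fun i _ => by
    rw [map_pow, MvPolynomial.finSuccEquiv_X_succ, ← map_pow]

lemma two_ne_zero_Rn (n : ℕ) : (2 : Rn n) ≠ 0 := by
  intro h
  have := congrArg (MvPolynomial.eval (fun _ => (0 : ℝ))) h
  rw [map_ofNat, map_zero] at this
  norm_num at this

lemma Kn_real (n : ℕ) : ∀ (k : ℕ) (f : Fin k → Kn n), ∑ s, f s ^ 2 = 0 → ∀ s, f s = 0 :=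
  fun _ f h => Kn_sumsq f h

lemma two_ne_zero_Kn (n : ℕ) : (2 : Kn n) ≠ 0 := by
  intro h
  have h1 : ∑ s : Fin 2, (1 : Kn n) ^ 2 = 0 := by
    rw [Fin.sum_univ_two, one_pow, ← h]; norm_num
  exact one_ne_zero (Kn_sumsq (fun _ : Fin 2 => (1 : Kn n)) h1 0)

def Pprop (m n : ℕ) : Prop :=
  ∃ (p : Fin m → Rn n) (w : Rn n), w ≠ 0 ∧ ∑ s, p s ^ 2 = qn n * w ^ 2

lemma step {m n : ℕ} (h : Pprop (m + 1) (n + 1)) : Pprop m n := by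
  obtain ⟨p, w, hw, hsum⟩ := h
  have hψinj : Function.Injective
      (Polynomial.mapRingHom (algebraMap (Rn n) (Kn n))) :=
    Polynomial.map_injective _ (IsFractionRing.injective (Rn n) (Kn n))
  set φ := MvPolynomial.finSuccEquiv ℝ n with hφ
  set ψ : Polynomial (Rn n) →+* Polynomial (Kn n) :=
    Polynomial.mapRingHom (algebraMap (Rn n) (Kn n)) with hψ
  set c : Kn n := algebraMap (Rn n) (Kn n) (qn n) with hc
  have hWWne : ψ (φ w) ≠ 0 := by
    intro h0
    apply hw
    have h1 : φ w = 0 := hψinj (by rw [h0, map_zero])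
    have h2 : φ w = φ 0 := by rw [h1, map_zero]
    exact φ.injective h2
  have hψq : ψ (X ^ 2 + Polynomial.C (qn n)) = X ^ 2 + Polynomial.C c := by
    rw [map_add, map_pow, hψ, Polynomial.coe_mapRingHom, Polynomial.map_X,
      Polynomial.map_C, hc]
  have hsum2 : ∑ s, (ψ (φ (p s))) ^ 2 = (X ^ 2 + Polynomial.C c) * (ψ (φ w)) ^ 2 := by
    have h1 := congrArg φ hsum
    rw [map_sum, map_mul, map_pow, finSuccEquiv_qn] at h1
    have h2 := congrArg ψ h1
    rw [map_sum, map_mul, map_pow, hψq] at h2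
    calc ∑ s, (ψ (φ (p s))) ^ 2 = ∑ s, ψ (φ (p s ^ 2)) := by
          exact Finset.sum_congr rfl fun s _ => by rw [map_pow, map_pow]
      _ = (X ^ 2 + Polynomial.C c) * (ψ (φ w)) ^ 2 := h2
  obtain ⟨Q, hQ⟩ := cassels_s9 (Kn_real n) (X ^ 2 + Polynomial.C c) (ψ (φ w)).natDegree
    (fun s => ψ (φ (p s))) (ψ (φ w)) hWWne le_rfl hsum2
  have hdeg := deg_le_one (Kn_real n) c Q hQ
  set a : Fin (m + 1) → Kn n := fun s => (Q s).coeff 1 with ha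
  set b : Fin (m + 1) → Kn n := fun s => (Q s).coeff 0 with hb
  have hQs : ∀ s, Q s = Polynomial.C (a s) * X + Polynomial.C (b s) := fun s =>
    eq_X_add_C_of_natDegree_le_one (hdeg s)
  have hsq : ∀ s ∈ Finset.univ, Q s ^ 2
      = Polynomial.C (a s ^ 2) * X ^ 2
        + Polynomial.C (2 * (a s * b s)) * X ^ 1 + Polynomial.C (b s ^ 2) * X ^ 0 := by
    intro s _
    rw [hQs s, map_pow, map_mul, map_mul, map_ofNat, map_pow]
    ring
  rw [Finset.sum_congr rfl hsq] at hQ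
  have hcoeff : ∀ j : ℕ, (∑ s, (Polynomial.C (a s ^ 2) * X ^ 2
      + Polynomial.C (2 * (a s * b s)) * X ^ 1 + Polynomial.C (b s ^ 2) * X ^ 0)).coeff j
      = (X ^ 2 + Polynomial.C c : Polynomial (Kn n)).coeff j :=
    fun j => by rw [hQ]
  have e2 : ∑ s, a s ^ 2 = 1 := by
    have := hcoeff 2
    simp only [finset_sum_coeff, Polynomial.coeff_add, Polynomial.coeff_C_mul,
      Polynomial.coeff_X_pow, Polynomial.coeff_C] at this
    norm_num at this
    convert this using 2
  have e1 : ∑ s, a s * b s = 0 := by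
    have := hcoeff 1
    simp only [finset_sum_coeff, Polynomial.coeff_add, Polynomial.coeff_C_mul,
      Polynomial.coeff_X_pow, Polynomial.coeff_C] at this
    norm_num [← Finset.mul_sum] at this
    exact this
  have e0 : ∑ s, b s ^ 2 = c := by
    have := hcoeff 0
    simp only [finset_sum_coeff, Polynomial.coeff_add, Polynomial.coeff_C_mul,
      Polynomial.coeff_X_pow, Polynomial.coeff_C] at this
    norm_num at this
    convert this using 2
  obtain ⟨e, he⟩ := reflect (Kn_real n) c a b e2 e1 e0
  obtain ⟨bb, hbb⟩ := IsLocalization.exist_integer_multiples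
    (nonZeroDivisors (Rn n)) Finset.univ e
  choose u hu using fun s => hbb s (Finset.mem_univ s)
  have hbbne : (bb : Rn n) ≠ 0 := nonZeroDivisors.coe_ne_zero bb
  have hinj := IsFractionRing.injective (Rn n) (Kn n)
  have hfinal : ∑ s, u s ^ 2 = qn n * (bb : Rn n) ^ 2 := by
    apply hinj
    rw [map_sum, map_mul, map_pow]
    calc ∑ s, (algebraMap (Rn n) (Kn n)) (u s ^ 2)
        = ∑ s, ((bb : Rn n) • e s) ^ 2 := by
          refine Finset.sum_congr rfl fun s _ => ?_
          rw [map_pow, hu s]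
      _ = (algebraMap (Rn n) (Kn n) (bb : Rn n)) ^ 2 * ∑ s, e s ^ 2 := by
          rw [Finset.mul_sum]
          refine Finset.sum_congr rfl fun s _ => ?_
          rw [Algebra.smul_def]; ring
      _ = algebraMap (Rn n) (Kn n) (qn n) * algebraMap (Rn n) (Kn n) ((bb : Rn n)) ^ 2 := by
          rw [he, hc]; ring
  exact ⟨u, bb, hbbne, hfinal⟩

lemma noP : ∀ m : ℕ, ¬ Pprop m (m + 4) := by
  intro m
  induction m with
  | zero =>
    rintro ⟨p, w, hw, hsum⟩
    have h0 : qn (0 + 4) * w ^ 2 = 0 := by rw [← hsum]; simp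
    rcases mul_eq_zero.mp h0 with h1 | h1
    · exact qn_ne_zero (by norm_num) h1
    · exact hw (pow_eq_zero_iff (two_ne_zero) |>.mp h1)
  | succ m ih => exact fun h => ih (step h)

lemma key8 (B : Fin 4 → Rn 8) (h : qn 8 ∣ ∑ t, B t ^ 2) : ∀ t, qn 8 ∣ B t := by
  set φ := MvPolynomial.finSuccEquiv ℝ 7 with hφ
  set π : Polynomial (Rn 7) := X ^ 2 + Polynomial.C (qn 7) with hπ
  have hq : φ (qn 8) = π := finSuccEquiv_qn 7
  have hπm : π.Monic := monic_X_pow_add (lt_of_le_of_lt degree_C_le (by norm_num))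
  have hπdeg : π.natDegree = 2 := natDegree_X_pow_add_C
  have hdvd : π ∣ ∑ t, φ (B t) ^ 2 := by
    obtain ⟨cc, hcc⟩ := h
    refine ⟨φ cc, ?_⟩
    have h1 := congrArg φ hcc
    rw [map_sum, map_mul, hq] at h1
    calc ∑ t, φ (B t) ^ 2 = ∑ t, φ (B t ^ 2) := by
          exact Finset.sum_congr rfl fun t _ => by rw [map_pow]
      _ = π * φ cc := h1
  set r : Fin 4 → Polynomial (Rn 7) := fun t => φ (B t) %ₘ π with hr
  have hrdeg : ∀ t, (r t).natDegree ≤ 1 := by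
    intro t
    rcases eq_or_ne (r t) 0 with h0 | h0
    · rw [h0]; simp
    · have h1 := degree_modByMonic_lt (φ (B t)) hπm
      have h2 : (r t).natDegree < π.natDegree := by
        apply natDegree_lt_natDegree h0
        simp only [hr]
        exact h1
      omega
  set g : Fin 4 → Rn 7 := fun t => (r t).coeff 1 with hg
  set f : Fin 4 → Rn 7 := fun t => (r t).coeff 0 with hf
  have hreq : ∀ t, r t = Polynomial.C (g t) * X + Polynomial.C (f t) := fun t =>
    eq_X_add_C_of_natDegree_le_one (hrdeg t)
  have hsub : ∀ t, π ∣ φ (B t) - r t := by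
    intro t
    refine ⟨φ (B t) /ₘ π, ?_⟩
    have h1 := modByMonic_add_div (φ (B t)) π
    simp only [hr]
    linear_combination -h1
  have hπr : π ∣ ∑ t, r t ^ 2 := by
    have h2 : π ∣ (∑ t, φ (B t) ^ 2) - ∑ t, r t ^ 2 := by
      rw [← Finset.sum_sub_distrib]
      refine Finset.dvd_sum fun t _ => ?_
      have h3 : φ (B t) ^ 2 - r t ^ 2 = (φ (B t) - r t) * (φ (B t) + r t) := by ring
      rw [h3]
      exact (hsub t).mul_right _
    have := dvd_sub hdvd h2
    simpa using this
  have hdegsum : (∑ t, r t ^ 2).natDegree ≤ 2 := by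
    apply natDegree_sum_le_of_forall_le
    intro t _
    rw [natDegree_pow]
    have := hrdeg t
    omega
  obtain ⟨β, hβ⟩ := hπr
  have hβC : β = Polynomial.C (β.coeff 0) := by
    rcases eq_or_ne β 0 with h0 | h0
    · rw [h0]; simp
    · apply eq_C_of_natDegree_le_zero
      rw [hβ, natDegree_mul hπm.ne_zero h0, hπdeg] at hdegsum
      omega
  set e : Rn 7 := β.coeff 0 with he
  rw [hβC] at hβ
  have hrsq : ∀ t ∈ Finset.univ, r t ^ 2
      = Polynomial.C (g t ^ 2) * X ^ 2
        + Polynomial.C (2 * (f t * g t)) * X ^ 1 + Polynomial.C (f t ^ 2) * X ^ 0 := by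
    intro t _
    rw [hreq t, map_pow, map_mul, map_mul, map_ofNat, map_pow]
    ring
  rw [Finset.sum_congr rfl hrsq] at hβ
  have hco : ∀ j : ℕ, (∑ t, (Polynomial.C (g t ^ 2) * X ^ 2
      + Polynomial.C (2 * (f t * g t)) * X ^ 1 + Polynomial.C (f t ^ 2) * X ^ 0)).coeff j
      = (π * Polynomial.C e).coeff j := fun j => by rw [hβ]
  have hπcoeff : ∀ j : ℕ, (π * Polynomial.C e).coeff j = π.coeff j * e := fun j =>
    Polynomial.coeff_mul_C π j e
  have c2 : ∑ t, g t ^ 2 = e := by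
    have := hco 2
    rw [hπcoeff 2] at this
    simp only [finset_sum_coeff, Polynomial.coeff_add, Polynomial.coeff_C_mul,
      Polynomial.coeff_X_pow, hπ, Polynomial.coeff_C] at this
    norm_num at this
    convert this using 2
  have c1 : ∑ t, f t * g t = 0 := by
    have := hco 1
    rw [hπcoeff 1] at this
    simp only [finset_sum_coeff, Polynomial.coeff_add, Polynomial.coeff_C_mul,
      Polynomial.coeff_X_pow, hπ, Polynomial.coeff_C] at this
    norm_num [← Finset.mul_sum] at this
    exact this
  have c0 : ∑ t, f t ^ 2 = qn 7 * e := by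
    have := hco 0
    rw [hπcoeff 0] at this
    simp only [finset_sum_coeff, Polynomial.coeff_add, Polynomial.coeff_C_mul,
      Polynomial.coeff_X_pow, hπ, Polynomial.coeff_C] at this
    norm_num at this
    convert this using 2
  rw [Fin.sum_univ_four] at c2 c1 c0
  have he0 : e = 0 := by
    by_contra hene
    apply noP 3
    refine ⟨![g 0 * f 1 - f 0 * g 1 - (f 2 * g 3 - f 3 * g 2),
              g 0 * f 2 - f 0 * g 2 - (f 3 * g 1 - f 1 * g 3),
              g 0 * f 3 - f 0 * g 3 - (f 1 * g 2 - f 2 * g 1)], e, hene, ?_⟩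
    rw [Fin.sum_univ_three]
    simp only [Matrix.cons_val_zero, Matrix.cons_val_one, Matrix.head_cons,
      Matrix.cons_val_two, Matrix.tail_cons]
    have hid : (g 0 * f 1 - f 0 * g 1 - (f 2 * g 3 - f 3 * g 2)) ^ 2
        + (g 0 * f 2 - f 0 * g 2 - (f 3 * g 1 - f 1 * g 3)) ^ 2
        + (g 0 * f 3 - f 0 * g 3 - (f 1 * g 2 - f 2 * g 1)) ^ 2
        = (f 0 ^ 2 + f 1 ^ 2 + f 2 ^ 2 + f 3 ^ 2) * (g 0 ^ 2 + g 1 ^ 2 + g 2 ^ 2 + g 3 ^ 2)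
          - (f 0 * g 0 + f 1 * g 1 + f 2 * g 2 + f 3 * g 3) ^ 2 := by ring
    rw [hid, c2, c1, c0]
    ring
  rw [he0] at c2 c0
  have hg0 : ∀ t, g t = 0 := sumsq_eq_zero g (by rw [Fin.sum_univ_four, c2])
  have hf0 : ∀ t, f t = 0 := sumsq_eq_zero f (by rw [Fin.sum_univ_four, c0, mul_zero])
  intro t
  have hrt0 : r t = 0 := by rw [hreq t, hg0 t, hf0 t]; simp
  have hπB : π ∣ φ (B t) := by
    refine ⟨φ (B t) /ₘ π, ?_⟩
    have h1 := modByMonic_add_div (φ (B t)) π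
    have h2 : φ (B t) %ₘ π = 0 := by
      have h3 := hrt0
      simp only [hr] at h3
      exact h3
    rw [h2, zero_add] at h1
    exact h1.symm
  obtain ⟨κ, hκ⟩ := hπB
  refine ⟨φ.symm κ, ?_⟩
  apply φ.injective
  rw [map_mul, hq, AlgEquiv.apply_symm_apply]
  exact hκ

lemma pad_sum {M : Type*} [AddCommMonoid M] {m : ℕ} (hm : m ≤ 4) (f : Fin m → M) :
    ∑ t : Fin 4, (if h : (t : ℕ) < m then f ⟨t, h⟩ else 0) = ∑ s, f s := by
  have h1 : ∑ s : Fin m, f s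
      = ∑ t ∈ Finset.range m, (if h : t < m then f ⟨t, h⟩ else 0) := by
    rw [← Fin.sum_univ_eq_sum_range (fun t => if h : t < m then f ⟨t, h⟩ else 0) m]
    refine Finset.sum_congr rfl fun s _ => ?_
    rw [dif_pos s.isLt]
  have h2 := Fin.sum_univ_eq_sum_range (fun t => if h : t < m then f ⟨t, h⟩ else 0) 4
  rw [h1, h2]
  refine (Finset.sum_subset (Finset.range_subset_range.mpr hm) fun x _ hx => ?_).symm
  rw [dif_neg (by simpa using hx)]

end Stmt9Aux

set_option maxHeartbeats 1000000
set_option synthInstance.maxHeartbeats 400000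

theorem stmt9 (m : ℕ) (hm : m ≤ 4)
    (A : Matrix (Fin 8) (Fin m) (MvPolynomial (Fin 8) ℝ))
    (D : Fin m → ℝ) (hD : ∀ s, 0 < D s)
    (h : ∀ i j, (∑ i : Fin 8, MvPolynomial.X i ^ 2 : MvPolynomial (Fin 8) ℝ) ∣
      ((A * (Matrix.diagonal (fun s => MvPolynomial.C (D s)) : Matrix (Fin m) (Fin m) (MvPolynomial (Fin 8) ℝ)) * A.transpose :
        Matrix (Fin 8) (Fin 8) (MvPolynomial (Fin 8) ℝ)) i j)) :
    ∀ i s, (∑ i : Fin 8, MvPolynomial.X i ^ 2 : MvPolynomial (Fin 8) ℝ) ∣ A i s := by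
  intro i s
  have hq8 : (∑ i : Fin 8, MvPolynomial.X i ^ 2 : MvPolynomial (Fin 8) ℝ) = qn 8 := rfl
  set B : Fin 4 → Rn 8 := fun t =>
    if ht : (t : ℕ) < m then MvPolynomial.C (Real.sqrt (D ⟨t, ht⟩)) * A i ⟨t, ht⟩ else 0
    with hB
  have hBsum : ∑ t, B t ^ 2 = ∑ s : Fin m, MvPolynomial.C (D s) * A i s ^ 2 := by
    have h1 : ∀ t ∈ Finset.univ, B t ^ 2 = if ht : (t : ℕ) < m then
        MvPolynomial.C (D ⟨t, ht⟩) * A i ⟨t, ht⟩ ^ 2 else 0 := by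
      intro t _
      by_cases ht : (t : ℕ) < m
      · rw [hB]
        simp only [dif_pos ht]
        rw [mul_pow, ← map_pow, Real.sq_sqrt (le_of_lt (hD ⟨t, ht⟩))]
      · rw [hB]
        simp only [dif_neg ht]
        ring
    rw [Finset.sum_congr rfl h1]
    exact pad_sum hm (fun s => MvPolynomial.C (D s) * A i s ^ 2)
  have hdiag : qn 8 ∣ ∑ s : Fin m, MvPolynomial.C (D s) * A i s ^ 2 := by
    have h2 := h i i
    rw [hq8] at h2
    have h3 : ((A * (Matrix.diagonal (fun s => MvPolynomial.C (D s)) : Matrix (Fin m) (Fin m) (MvPolynomial (Fin 8) ℝ)) * A.transpose :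
          Matrix (Fin 8) (Fin 8) (MvPolynomial (Fin 8) ℝ)) i i)
        = ∑ s : Fin m, MvPolynomial.C (D s) * A i s ^ 2 := by
      rw [Matrix.mul_apply]
      refine Finset.sum_congr rfl fun t _ => ?_
      rw [Matrix.mul_diagonal, Matrix.transpose_apply]
      ring
    rwa [h3] at h2
  have hkey := key8 B (by rw [hBsum]; exact hdiag)
  have hts : ((Fin.castLE hm s : Fin 4) : ℕ) < m := by
    simp [Fin.castLE]
  have hBt : B (Fin.castLE hm s) = MvPolynomial.C (Real.sqrt (D s)) * A i s := by
    rw [hB]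
    simp only [dif_pos hts]
    congr 1 <;> congr 1 <;> exact Fin.ext (by simp [Fin.castLE])
  have hdvdB := hkey (Fin.castLE hm s)
  rw [hBt] at hdvdB
  have hsne : Real.sqrt (D s) ≠ 0 := ne_of_gt (Real.sqrt_pos.mpr (hD s))
  rw [hq8]
  have hA : A i s = MvPolynomial.C (Real.sqrt (D s))⁻¹
      * (MvPolynomial.C (Real.sqrt (D s)) * A i s) := by
    rw [← mul_assoc, ← map_mul, inv_mul_cancel₀ hsne, map_one, one_mul]
  rw [hA]
  exact hdvdB.mul_left _
end

section
/- Let J₁,...,J₇ be anticommuting skew-symmetric orthogonal operators on R⁸. Then the 28 operators {J_j : 1 ≤ j ≤ 7} ∪ {J_jJ_k : 1 ≤ j < k ≤ 7} form a basis of the space of skew-symmetric linear operators on R⁸. -/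
/-!
Conjugation by `J m` multiplies `J i`, resp. `J k * J l`, by a sign `±1`, and as a function of `m`
these 28 sign patterns are pairwise distinct. So for distinct monomials `A ≠ B` the product
`A * B` anticommutes with some `J m` and is traceless, whereas `A * A = -1` has trace `-8`: the
monomials are orthogonal for the trace form, hence linearly independent. A skew-symmetric operator
on `ℝ⁸` is determined by its 28 entries above the diagonal, so they also span.
-/

open RealInnerProductSpace

def SignCommute {R : Type*} [Ring R] (s : ℤˣ) (K A : R) : Prop := K * A = s • (A * K)

theorem SignCommute.mul_right {R : Type*} [Ring R] {s t : ℤˣ} {K A B : R}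
    (hA : SignCommute s K A) (hB : SignCommute t K B) : SignCommute (s * t) K (A * B) := by
  unfold SignCommute at *
  rw [← mul_assoc, hA, smul_mul_assoc, mul_assoc, hB, mul_smul_comm, mul_smul, mul_assoc]

namespace LinearMap

variable {K M : Type*} [Field K] [CharZero K] [AddCommGroup M] [Module K M]

theorem trace_eq_zero_of_signCommute {P A : Module.End K M} (hP : P * P = -1)
    (h : SignCommute (-1) P A) : trace K M A = 0 := by
  have h' : A * P = -(P * A) := by
    rw [h, Units.neg_smul, one_smul, neg_neg]
  refine self_eq_neg.mp ?_
  calc trace K M A = -trace K M (A * P * P) := by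
        rw [mul_assoc, hP, mul_neg_one, map_neg, neg_neg]
    _ = -trace K M (P * (A * P)) := by rw [trace_mul_comm]
    _ = -trace K M A := by rw [h', mul_neg, ← mul_assoc, hP, neg_one_mul, neg_neg]

theorem linearIndependent_of_signCommute [FiniteDimensional K M] [Nontrivial M]
    {ι κ : Type*} {v : ι → Module.End K M} {P : κ → Module.End K M} {χ : κ → ι → ℤˣ}
    (hP : ∀ m, P m * P m = -1) (hv : ∀ a, v a * v a = -1)
    (hχ : ∀ m a, SignCommute (χ m a) (P m) (v a))
    (hsep : ∀ a b, a ≠ b → ∃ m, χ m a ≠ χ m b) : LinearIndependent K v := by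
  let traceForm : LinearMap.BilinForm K (Module.End K M) :=
    (LinearMap.mul K (Module.End K M)).compr₂ (trace K M)
  refine traceForm.linearIndependent_of_iIsOrtho (fun a b hab => ?_) (fun a => ?_)
  · obtain ⟨m, hm⟩ := hsep a b hab
    have hsign : χ m a * χ m b = -1 := by
      rw [Int.units_ne_iff_eq_neg.mp hm, neg_mul, Int.units_mul_self]
    exact trace_eq_zero_of_signCommute (hP m) (hsign ▸ (hχ m a).mul_right (hχ m b))
  · change trace K M (v a * v a) ≠ 0
    rw [hv, map_neg, trace_one, neg_ne_zero, Nat.cast_ne_zero]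
    exact Module.finrank_pos.ne'

end LinearMap

section Clifford

variable {R : Type*} [Ring R] {n : ℕ} {J : Fin n → R}

def degOneTwoMonomials (J : Fin n → R) : Fin n ⊕ {p : Fin n × Fin n // p.1 < p.2} → R :=
  Sum.elim J fun p => J p.1.1 * J p.1.2

def generatorSign (m i : Fin n) : ℤˣ := if m = i then 1 else -1

def monomialSign (m : Fin n) : Fin n ⊕ {p : Fin n × Fin n // p.1 < p.2} → ℤˣ :=
  Sum.elim (generatorSign m) fun p => generatorSign m p.1.1 * generatorSign m p.1.2

variable (hanti : ∀ i j, i ≠ j → J i * J j = -(J j * J i))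
include hanti

theorem signCommute_generatorSign (m i : Fin n) : SignCommute (generatorSign m i) (J m) (J i) := by
  unfold SignCommute generatorSign
  split_ifs with h
  · rw [h, one_smul]
  · rw [Units.neg_smul, one_smul, hanti m i h]

theorem signCommute_monomialSign (m : Fin n) (a : Fin n ⊕ {p : Fin n × Fin n // p.1 < p.2}) :
    SignCommute (monomialSign m a) (J m) (degOneTwoMonomials J a) := by
  cases a with
  | inl i => exact signCommute_generatorSign hanti m i
  | inr p =>
    exact (signCommute_generatorSign hanti m _).mul_right (signCommute_generatorSign hanti m _)

theorem degOneTwoMonomials_mul_self (hsq : ∀ i, J i * J i = -1)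
    (a : Fin n ⊕ {p : Fin n × Fin n // p.1 < p.2}) :
    degOneTwoMonomials J a * degOneTwoMonomials J a = -1 := by
  cases a with
  | inl i => exact hsq i
  | inr p =>
    change J p.1.1 * J p.1.2 * (J p.1.1 * J p.1.2) = -1
    rw [mul_assoc, ← mul_assoc (J p.1.2), hanti _ _ p.2.ne', neg_mul, mul_neg, mul_assoc,
      hsq, ← mul_assoc, hsq]
    simp

end Clifford

theorem monomialSign_separates (a b : Fin 7 ⊕ {p : Fin 7 × Fin 7 // p.1 < p.2}) (h : a ≠ b) :
    ∃ m, monomialSign m a ≠ monomialSign m b := by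
  revert a b; decide

section SkewAdjoint

variable {ι F : Type*} [Fintype ι] [LinearOrder ι] [NormedAddCommGroup F] [InnerProductSpace ℝ F]

theorem mem_skewAdjointSubmodule_innerₗ {T : Module.End ℝ F} :
    T ∈ (innerₗ F).skewAdjointSubmodule ↔ ∀ x y, ⟪T x, y⟫ = -⟪x, T y⟫ := by
  simp only [LinearMap.mem_skewAdjointSubmodule, LinearMap.IsSkewAdjoint, LinearMap.IsAdjointPair,
    innerₗ_apply_apply, Pi.neg_apply, inner_neg_right]

noncomputable def OrthonormalBasis.upperEntries (b : OrthonormalBasis ι ℝ F) :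
    Module.End ℝ F →ₗ[ℝ] ({p : ι × ι // p.1 < p.2} → ℝ) where
  toFun T p := ⟪T (b p.1.2), b p.1.1⟫
  map_add' S T := by ext p; simp [inner_add_left]
  map_smul' c T := by ext p; simp [real_inner_smul_left]

theorem OrthonormalBasis.eq_zero_of_upperEntries_eq_zero (b : OrthonormalBasis ι ℝ F)
    {T : Module.End ℝ F} (hT : ∀ x y, ⟪T x, y⟫ = -⟪x, T y⟫) (h : b.upperEntries T = 0) :
    T = 0 := by
  have hentry : ∀ i j, ⟪T (b j), b i⟫ = 0 := by
    intro i j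
    rcases lt_trichotomy i j with hij | rfl | hij
    · exact congrFun h ⟨(i, j), hij⟩
    · exact self_eq_neg.mp ((hT _ _).trans (by rw [real_inner_comm]))
    · have hji : ⟪T (b i), b j⟫ = 0 := congrFun h ⟨(j, i), hij⟩
      rw [hT, real_inner_comm, hji, neg_zero]
  refine b.toBasis.ext fun j => InnerProductSpace.ext_inner_right_basis b.toBasis fun i => ?_
  simpa using hentry i j

theorem OrthonormalBasis.finrank_skewAdjointSubmodule_le (b : OrthonormalBasis ι ℝ F) :
    Module.finrank ℝ (innerₗ F).skewAdjointSubmodule ≤ Fintype.card {p : ι × ι // p.1 < p.2} := by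
  have hinj : Function.Injective (b.upperEntries.domRestrict (innerₗ F).skewAdjointSubmodule) := by
    rw [← LinearMap.ker_eq_bot, LinearMap.ker_eq_bot']
    intro T hT
    exact Subtype.ext <|
      b.eq_zero_of_upperEntries_eq_zero (mem_skewAdjointSubmodule_innerₗ.mp T.2) hT
  simpa using LinearMap.finrank_le_finrank_of_injective hinj

end SkewAdjoint

theorem LinearIndependent.span_range_eq_of_finrank_le {K V ι : Type*} [Field K] [AddCommGroup V]
    [Module K V] [Fintype ι] {v : ι → V} {S : Submodule K V} [FiniteDimensional K S]
    (hv : LinearIndependent K v) (hmem : ∀ a, v a ∈ S)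
    (hdim : Module.finrank K S ≤ Fintype.card ι) : Submodule.span K (Set.range v) = S :=
  Submodule.eq_of_le_of_finrank_le (Submodule.span_le.mpr (Set.range_subset_iff.mpr hmem))
    (hdim.trans (finrank_span_eq_card hv).ge)

theorem LinearMap.mul_mem_skewAdjointSubmodule {R M M₂ : Type*} [CommRing R] [AddCommGroup M]
    [Module R M] [AddCommGroup M₂] [Module R M₂] {B : M →ₗ[R] M →ₗ[R] M₂} {f g : Module.End R M}
    (hf : f ∈ B.skewAdjointSubmodule) (hg : g ∈ B.skewAdjointSubmodule) (hfg : g * f = -(f * g)) :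
    f * g ∈ B.skewAdjointSubmodule := by
  rw [mem_skewAdjointSubmodule] at *
  intro x y
  calc B (f (g x)) y = B (g x) (-f y) := hf _ _
    _ = B x (g (f y)) := by rw [hg]; simp
    _ = B x (-(f * g) y) := by rw [← Module.End.mul_apply, hfg]; rfl

theorem stmt18_general
    (J : Fin 7 → (EuclideanSpace ℝ (Fin 8) →ₗ[ℝ] EuclideanSpace ℝ (Fin 8)))
    (hskew : ∀ i X Y, ⟪J i X, Y⟫ = -⟪X, J i Y⟫)
    (hanti : ∀ i j, (J i) ∘ₗ (J j) + (J j) ∘ₗ (J i) =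
      ((-2 : ℝ) * (if i = j then (1 : ℝ) else 0)) •
        (LinearMap.id : EuclideanSpace ℝ (Fin 8) →ₗ[ℝ] EuclideanSpace ℝ (Fin 8))) :
    LinearIndependent ℝ
      (Sum.elim J (fun p : {p : Fin 7 × Fin 7 // p.1 < p.2} => (J p.1.1) ∘ₗ (J p.1.2))) ∧
    ∀ T : EuclideanSpace ℝ (Fin 8) →ₗ[ℝ] EuclideanSpace ℝ (Fin 8),
      (∀ X Y, ⟪T X, Y⟫ = -⟪X, T Y⟫) →
      T ∈ Submodule.span ℝ (Set.range
        (Sum.elim J (fun p : {p : Fin 7 × Fin 7 // p.1 < p.2} => (J p.1.1) ∘ₗ (J p.1.2)))) := by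
  have hsq : ∀ i, J i * J i = -1 := fun i => by
    have h := hanti i i
    rw [if_pos rfl] at h
    linear_combination (norm := module) (2 : ℝ)⁻¹ • h
  have hanticomm : ∀ i j, i ≠ j → J i * J j = -(J j * J i) := fun i j hij => by
    have h := hanti i j
    rw [if_neg hij] at h
    linear_combination (norm := module) h
  have hindep : LinearIndependent ℝ (degOneTwoMonomials J) :=
    LinearMap.linearIndependent_of_signCommute hsq (degOneTwoMonomials_mul_self hanticomm hsq)
      (signCommute_monomialSign hanticomm) monomialSign_separates
  have hJ : ∀ i, J i ∈ (innerₗ (EuclideanSpace ℝ (Fin 8))).skewAdjointSubmodule :=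
    fun i => mem_skewAdjointSubmodule_innerₗ.mpr (hskew i)
  have hmem : ∀ a, degOneTwoMonomials J a ∈ (innerₗ _).skewAdjointSubmodule
    | .inl i => hJ i
    | .inr p => LinearMap.mul_mem_skewAdjointSubmodule (hJ _) (hJ _) (hanticomm _ _ p.2.ne')
  have hspan := hindep.span_range_eq_of_finrank_le hmem
    ((EuclideanSpace.basisFun (Fin 8) ℝ).finrank_skewAdjointSubmodule_le.trans_eq rfl)
  exact ⟨hindep, fun T hT => hspan ▸ mem_skewAdjointSubmodule_innerₗ.mpr hT⟩

theorem stmt18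
    (J : Fin 7 → (EuclideanSpace ℝ (Fin 8) →ₗ[ℝ] EuclideanSpace ℝ (Fin 8)))
    (hskew : ∀ i X Y, ⟪J i X, Y⟫ = -⟪X, J i Y⟫)
    (horth : ∀ i X, ‖J i X‖ = ‖X‖)
    (hanti : ∀ i j, (J i) ∘ₗ (J j) + (J j) ∘ₗ (J i) =
      ((-2 : ℝ) * (if i = j then (1 : ℝ) else 0)) •
        (LinearMap.id : EuclideanSpace ℝ (Fin 8) →ₗ[ℝ] EuclideanSpace ℝ (Fin 8))) :
    LinearIndependent ℝ
      (Sum.elim J (fun p : {p : Fin 7 × Fin 7 // p.1 < p.2} => (J p.1.1) ∘ₗ (J p.1.2))) ∧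
    ∀ T : EuclideanSpace ℝ (Fin 8) →ₗ[ℝ] EuclideanSpace ℝ (Fin 8),
      (∀ X Y, ⟪T X, Y⟫ = -⟪X, T Y⟫) →
      T ∈ Submodule.span ℝ (Set.range
        (Sum.elim J (fun p : {p : Fin 7 × Fin 7 // p.1 < p.2} => (J p.1.1) ∘ₗ (J p.1.2)))) :=
  stmt18_general J hskew hanti
end

section
/- Let J₁,...,J₇ be anticommuting skew-symmetric orthogonal operators on R⁸. Then for every nonzero X ∈ R⁸, the vectors X, J₁X, ..., J₇X form an orthogonal basis of R⁸, all of length ‖X‖; consequently ‖X‖²Y − ⟨X,Y⟩X = Σ_{i=1}^7 ⟨J_iX,Y⟩J_iX for all Y. -/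
open RealInnerProductSpace

theorem stmt19
    (J : Fin 7 → (EuclideanSpace ℝ (Fin 8) →ₗ[ℝ] EuclideanSpace ℝ (Fin 8)))
    (hskew : ∀ i X Y, ⟪J i X, Y⟫ = -⟪X, J i Y⟫)
    (horth : ∀ i X, ‖J i X‖ = ‖X‖)
    (hanti : ∀ i j, i ≠ j → ∀ X, J i (J j X) = -(J j (J i X)))
    (X : EuclideanSpace ℝ (Fin 8)) (hX : X ≠ 0) :
    (∀ i, ‖J i X‖ = ‖X‖) ∧
    (∀ i, ⟪X, J i X⟫ = 0) ∧
    (∀ i j, i ≠ j → ⟪J i X, J j X⟫ = 0) ∧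
    (∀ Y, (‖X‖ ^ 2 : ℝ) • Y - ⟪X, Y⟫ • X = ∑ i, ⟪J i X, Y⟫ • J i X) := by
  have hXnorm : ‖X‖ ≠ 0 := norm_ne_zero_iff.mpr hX
  have hIX : ∀ i, ⟪X, J i X⟫ = 0 := by
    intro i
    have h1 := hskew i X X
    have h2 : ⟪J i X, X⟫ = ⟪X, J i X⟫ := real_inner_comm _ _
    linarith
  have hIJ : ∀ i j, i ≠ j → ⟪J i X, J j X⟫ = 0 := by
    intro i j hij
    have h1 := hskew i X (J j X)
    have h2 : ⟪X, J i (J j X)⟫ = -⟪X, J j (J i X)⟫ := by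
      rw [hanti i j hij]; exact inner_neg_right _ _
    have h3 := hskew j X (J i X)
    have h4 : ⟪J i X, J j X⟫ = ⟪J j X, J i X⟫ := real_inner_comm _ _
    linarith
  refine ⟨fun i => horth i X, hIX, hIJ, ?_⟩
  -- build the orthonormal family
  set v : Fin 8 → EuclideanSpace ℝ (Fin 8) :=
    Fin.cons X (fun i => J i X) with hv
  have hvnorm : ∀ i, ‖v i‖ = ‖X‖ := by
    intro i
    refine Fin.cases ?_ ?_ i <;> simp [hv, horth]
  have hvinner : ∀ i j, i ≠ j → ⟪v i, v j⟫ = 0 := by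
    intro i j
    refine Fin.cases ?_ ?_ i
    · refine Fin.cases ?_ ?_ j
      · intro h; exact absurd rfl h
      · intro c _
        simp only [hv, Fin.cons_succ, Fin.cons_zero]
        exact hIX c
    · intro a
      refine Fin.cases ?_ ?_ j
      · intro _
        simp only [hv, Fin.cons_succ, Fin.cons_zero]
        rw [real_inner_comm]
        exact hIX a
      · intro c h
        have hac : a ≠ c := fun he => h (by rw [he])
        simp only [hv, Fin.cons_succ]
        exact hIJ a c hac
  set b : Fin 8 → EuclideanSpace ℝ (Fin 8) := fun i => (‖X‖⁻¹ : ℝ) • v i with hb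
  have hortho : Orthonormal ℝ b := by
    rw [orthonormal_iff_ite]
    intro i j
    by_cases h : i = j
    · subst h
      simp only [hb, real_inner_smul_left, real_inner_smul_right, if_pos rfl]
      rw [real_inner_self_eq_norm_sq, hvnorm]
      field_simp
      simp
    · simp only [hb, real_inner_smul_left, real_inner_smul_right, if_neg h,
        hvinner i j h, mul_zero]
  have hcard : Fintype.card (Fin 8) = Module.finrank ℝ (EuclideanSpace ℝ (Fin 8)) := by
    simp
  let B : OrthonormalBasis (Fin 8) ℝ (EuclideanSpace ℝ (Fin 8)) :=
    (basisOfOrthonormalOfCardEqFinrank hortho hcard).toOrthonormalBasis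
      (by rwa [coe_basisOfOrthonormalOfCardEqFinrank])
  have hB : ∀ i, B i = b i := by
    intro i
    simp [B, Module.Basis.coe_toOrthonormalBasis, coe_basisOfOrthonormalOfCardEqFinrank]
  intro Y
  have hrepr : ∑ i, ⟪B i, Y⟫ • B i = Y := B.sum_repr' Y
  have hrepr2 : ∑ i, ⟪b i, Y⟫ • b i = Y := by
    simpa only [hB] using hrepr
  have key : (‖X‖ ^ 2 : ℝ) • Y = ∑ i, ⟪v i, Y⟫ • v i := by
    have h1 : ∑ i, ⟪b i, Y⟫ • b i = (‖X‖⁻¹ * ‖X‖⁻¹) • ∑ i, ⟪v i, Y⟫ • v i := by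
      rw [Finset.smul_sum]
      refine Finset.sum_congr rfl fun i _ => ?_
      simp only [hb, real_inner_smul_left, smul_smul]
      ring_nf
    rw [h1] at hrepr2
    have h2 := congrArg (fun z => (‖X‖ ^ 2 : ℝ) • z) hrepr2.symm
    simp only [smul_smul] at h2
    rw [show (‖X‖ ^ 2 : ℝ) * (‖X‖⁻¹ * ‖X‖⁻¹) = 1 by field_simp] at h2
    simpa using h2
  have hsplit : ∑ i : Fin 8, ⟪v i, Y⟫ • v i
      = ⟪X, Y⟫ • X + ∑ i : Fin 7, ⟪J i X, Y⟫ • J i X := by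
    rw [Fin.sum_univ_succ]
    simp [hv]
  rw [key, hsplit]
  abel
end
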